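/- arXiv:1405.2946 — 3 statements merged into one kernel-verified Lean document; each statement's English description precedes it below -/
import Mathlib

section
/- Let U : Δ → B(X) be an evolution operator and P a projection valued function compatible with U such that ‖G(t,s)‖ ≤ M (1/(s+1)) ((t+1)/(s+1))^{ω·sign(t−s)} (s+1)^α for all t,s ≥ 0 with t ≠ s, for some ω > 0, α ≥ 0 and M ≥ 1. If there exist p ≥ 1, γ > α, ε ≥ 0 and D > 0 such that ∫₀^{+∞} (1/(τ+1)) ((τ+1)/(t+1))^{pγ·sign(τ−t)} ‖G(τ,t)x‖^p dτ ≤ D (t+1)^{pε} ‖x‖^p for every t ≥ 0 and x ∈ X, then U has a nonuniform polynomial dichotomy with projection valued function P, i.e. there exist ã,b̃ > 0, ε̃ ≥ 0 and N₁,N₂ ≥ 1 with ‖U(t,s)P(s)‖ ≤ N₁ ((t+1)/(s+1))^{−ã} (s+1)^{ε̃} and ‖U_Q(s,t)Q(t)‖ ≤ N₂ ((t+1)/(s+1))^{−b̃} (t+1)^{ε̃} for all t ≥ s ≥ 0. -/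
open Real MeasureTheory Filter

noncomputable section

/-- A growth rate: an increasing function `μ : [0,∞) → [1,∞)` with `μ 0 = 1` and
`μ t → ∞` as `t → ∞`. -/
def IsGrowthRate (μ : ℝ → ℝ) : Prop :=
  (∀ t, 0 ≤ t → 1 ≤ μ t) ∧ MonotoneOn μ (Set.Ici 0) ∧ μ 0 = 1 ∧
    Filter.Tendsto μ Filter.atTop Filter.atTop

variable {X : Type*} [NormedAddCommGroup X] [NormedSpace ℝ X]

/-- An evolution operator on `X`. -/
def IsEvolutionOperator (U : ℝ → ℝ → X →L[ℝ] X) : Prop :=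
  (∀ t, 0 ≤ t → U t t = 1) ∧
  (∀ s τ t, 0 ≤ s → s ≤ τ → τ ≤ t → (U t τ).comp (U τ s) = U t s) ∧
  (∀ x : X, ContinuousOn (fun q : ℝ × ℝ => U q.1 q.2 x) {q : ℝ × ℝ | 0 ≤ q.2 ∧ q.2 ≤ q.1})

/-- A (strongly continuous) projection valued function. -/
def IsProjectionValued (P : ℝ → X →L[ℝ] X) : Prop :=
  (∀ t, 0 ≤ t → (P t).comp (P t) = P t) ∧
  (∀ x : X, ContinuousOn (fun t => P t x) (Set.Ici 0))

/-- `P` is compatible with the evolution operator `U`; `V s t` plays the role of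
`U_Q(s,t)`, the inverse of the restriction `U(t,s)|_{Q(s)X} : Q(s)X → Q(t)X`,
where `Q t = 1 - P t`. -/
def CompatibleProjection (U V : ℝ → ℝ → X →L[ℝ] X) (P : ℝ → X →L[ℝ] X) : Prop :=
  (∀ s t, 0 ≤ s → s ≤ t → (P t).comp (U t s) = (U t s).comp (P s)) ∧
  (∀ s t, 0 ≤ s → s ≤ t → ∀ x : X,
    (1 - P s) (V s t ((1 - P t) x)) = V s t ((1 - P t) x)) ∧
  (∀ s t, 0 ≤ s → s ≤ t → ∀ x : X, U t s (V s t ((1 - P t) x)) = (1 - P t) x) ∧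
  (∀ s t, 0 ≤ s → s ≤ t → ∀ x : X, V s t (U t s ((1 - P s) x)) = (1 - P s) x)

/-- Nonuniform μ-dichotomy. -/
def NonuniformMuDichotomy (μ : ℝ → ℝ) (U V : ℝ → ℝ → X →L[ℝ] X)
    (P : ℝ → X →L[ℝ] X) : Prop :=
  ∃ a b ε N₁ N₂ : ℝ, 0 < a ∧ 0 < b ∧ 0 ≤ ε ∧ 1 ≤ N₁ ∧ 1 ≤ N₂ ∧
    ∀ s t, 0 ≤ s → s ≤ t →
      ‖(U t s).comp (P s)‖ ≤ N₁ * (μ t / μ s) ^ (-a) * μ s ^ ε ∧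
      ‖(V s t).comp (1 - P t)‖ ≤ N₂ * (μ t / μ s) ^ (-b) * μ t ^ ε

/-- Uniform μ-dichotomy (the case ε = 0). -/
def UniformMuDichotomy (μ : ℝ → ℝ) (U V : ℝ → ℝ → X →L[ℝ] X)
    (P : ℝ → X →L[ℝ] X) : Prop :=
  ∃ a b N₁ N₂ : ℝ, 0 < a ∧ 0 < b ∧ 1 ≤ N₁ ∧ 1 ≤ N₂ ∧
    ∀ s t, 0 ≤ s → s ≤ t →
      ‖(U t s).comp (P s)‖ ≤ N₁ * (μ t / μ s) ^ (-a) ∧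
      ‖(V s t).comp (1 - P t)‖ ≤ N₂ * (μ t / μ s) ^ (-b)

/-- The Green function associated to `U` and `P`:
`G(t,s) = U(t,s)P(s)` for `t > s` and `G(t,s) = -U_Q(t,s)Q(s)` for `t < s`. -/
def greenFunction (U V : ℝ → ℝ → X →L[ℝ] X) (P : ℝ → X →L[ℝ] X) (t s : ℝ) :
    X →L[ℝ] X :=
  if s < t then (U t s).comp (P s)
  else if t < s then -((V t s).comp (1 - P s))
  else 0

/-- Membership in the class `H^μ_{γ,p}(P)`. -/
def MemHClass (μ : ℝ → ℝ) (P : ℝ → X →L[ℝ] X) (γ p : ℝ) (H : ℝ → X →L[ℝ] X) : Prop :=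
  (∀ x : X, ContinuousOn (fun t => H t x) (Set.Ici 0)) ∧
  (∀ t, 0 ≤ t → ∀ x : X,
    ‖H t x‖ ≤ (deriv μ t / μ t) ^ (1 / p) * μ t ^ γ * ‖P t x‖ +
      (deriv μ t / μ t) ^ (1 / p) * μ t ^ (-γ) * ‖(1 - P t) x‖)

/-!
Near the diagonal, `t + 1 ≤ 2 (s + 1)`, the pointwise bound on `G` already gives
`‖U(t,s)P(s)‖ ≲ (s+1)^α` and `‖U_Q(s,t)Q(t)‖ ≲ (t+1)^α`; on the diagonal itself `P(s)` is
reached as the strong limit of `U(t,s)P(s)` as `t ↓ s`.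
Far from the diagonal, the cocycle property gives `U(t,s)P(s)x = U(t,τ)P(τ) G(τ,s)x` for
every `τ` in the window `((t-1)/2, t)`, and `U_Q(s,t)Q(t)x = -U_Q(s,τ)Q(τ) G(τ,t)x` for every
`τ ∈ (s, 2s+1)`. The outer factor is near-diagonal, so `‖G(τ,·)x‖` is bounded below on the
whole window; as the window has length comparable to `1/weight`, the weighted integral
estimate turns this lower bound into the decay `((t+1)/(s+1))^{-γ}`, at the price of the
factor `(t+1)^α`. This gives the dichotomy with `a = γ - α`, `b = γ` and `ε' = α + ε`.
-/

open Topology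

theorem mul_le_of_setLIntegral_rpow_le {Ω : Type*} [MeasurableSpace Ω] {μ : Measure Ω}
    {S J : Set Ω} {g w : Ω → ℝ} {A B c θ L D y p : ℝ}
    (hJ : MeasurableSet J) (hJS : J ⊆ S) (hvol : μ J = ENNReal.ofReal L) (hL : 0 < L)
    (hA : 0 ≤ A) (hB : 0 < B) (hc : 0 < c) (hθ : 0 ≤ θ) (hD : 0 ≤ D) (hy : 0 ≤ y) (hp : 0 < p)
    (hg : ∀ τ ∈ J, A ≤ B * g τ) (hw : ∀ τ ∈ J, c * θ ^ p ≤ w τ)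
    (hint : ∫⁻ τ in S, ENNReal.ofReal (w τ * g τ ^ p) ∂μ ≤ ENNReal.ofReal (D * y ^ p)) :
    θ * A ≤ (D / (c * L)) ^ (1 / p) * y * B := by
  have hAB : 0 ≤ A / B := div_nonneg hA hB.le
  have hpoint : ∀ τ ∈ J, c * θ ^ p * (A / B) ^ p ≤ w τ * g τ ^ p := fun τ hτ =>
    mul_le_mul (hw τ hτ)
      (Real.rpow_le_rpow hAB ((div_le_iff₀' hB).2 (hg τ hτ)) hp.le) (by positivity)
      ((by positivity : 0 ≤ c * θ ^ p).trans (hw τ hτ))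
  have hlower : c * θ ^ p * (A / B) ^ p * L ≤ D * y ^ p := by
    have := calc ENNReal.ofReal (c * θ ^ p * (A / B) ^ p) * μ J
        = ∫⁻ _ in J, ENNReal.ofReal (c * θ ^ p * (A / B) ^ p) ∂μ := (setLIntegral_const J _).symm
      _ ≤ ∫⁻ τ in J, ENNReal.ofReal (w τ * g τ ^ p) ∂μ :=
          setLIntegral_mono' hJ fun τ hτ => ENNReal.ofReal_le_ofReal (hpoint τ hτ)
      _ ≤ ∫⁻ τ in S, ENNReal.ofReal (w τ * g τ ^ p) ∂μ := lintegral_mono_set hJS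
      _ ≤ ENNReal.ofReal (D * y ^ p) := hint
    rwa [hvol, ← ENNReal.ofReal_mul (by positivity),
      ENNReal.ofReal_le_ofReal_iff (by positivity)] at this
  have hpow : (θ * (A / B)) ^ p ≤ ((D / (c * L)) ^ (1 / p) * y) ^ p := by
    rw [Real.mul_rpow hθ hAB, Real.mul_rpow (by positivity) hy, ← Real.rpow_mul (by positivity),
      one_div_mul_cancel hp.ne', Real.rpow_one, div_mul_eq_mul_div, le_div_iff₀ (by positivity)]
    linarith
  have := (Real.rpow_le_rpow_iff (by positivity) (by positivity) hp).1 hpow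
  rwa [mul_div_assoc', div_le_iff₀ hB] at this

theorem le_two_rpow_mul_rpow_neg_mul {r γ A Z : ℝ} (hr : 0 < r) (h : (r / 2) ^ γ * A ≤ Z) :
    A ≤ 2 ^ γ * r ^ (-γ) * Z := by
  have hinv : 2 ^ γ * r ^ (-γ) * (r / 2) ^ γ = 1 := by
    rw [Real.div_rpow hr.le zero_le_two, Real.rpow_neg hr.le]
    field_simp
  calc A = 2 ^ γ * r ^ (-γ) * ((r / 2) ^ γ * A) := by rw [← mul_assoc, hinv, one_mul]
    _ ≤ 2 ^ γ * r ^ (-γ) * Z := mul_le_mul_of_nonneg_left h (by positivity)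

theorem one_le_two_rpow_mul_rpow_neg {r a γ : ℝ} (hr : 0 < r) (hr2 : r ≤ 2) (ha : 0 ≤ a)
    (haγ : a ≤ γ) : 1 ≤ 2 ^ γ * r ^ (-a) := by
  have h2 : (0 : ℝ) < 2 ^ γ := by positivity
  calc (1 : ℝ) = 2 ^ γ * 2 ^ (-γ) := by rw [Real.rpow_neg zero_le_two, mul_inv_cancel₀ h2.ne']
    _ ≤ 2 ^ γ * 2 ^ (-a) :=
        mul_le_mul_of_nonneg_left (Real.rpow_le_rpow_of_exponent_le one_le_two (by linarith)) h2.le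
    _ ≤ 2 ^ γ * r ^ (-a) :=
        mul_le_mul_of_nonneg_left (Real.rpow_le_rpow_of_nonpos hr hr2 (by linarith)) h2.le

def PolynomialGreenBound (U V : ℝ → ℝ → X →L[ℝ] X) (P : ℝ → X →L[ℝ] X) (M ω α : ℝ) : Prop :=
  ∀ t s, 0 ≤ t → 0 ≤ s → t ≠ s →
    ‖greenFunction U V P t s‖ ≤
      M * (1 / (s + 1)) * ((t + 1) / (s + 1)) ^ (ω * Real.sign (t - s)) * (s + 1) ^ α

def PolynomialGreenIntegralBound (U V : ℝ → ℝ → X →L[ℝ] X) (P : ℝ → X →L[ℝ] X)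
    (p γ ε D : ℝ) : Prop :=
  ∀ t, 0 ≤ t → ∀ x : X,
    ∫⁻ τ in Set.Ioi (0 : ℝ), ENNReal.ofReal
        (1 / (τ + 1) * ((τ + 1) / (t + 1)) ^ (p * γ * Real.sign (τ - t)) *
          ‖greenFunction U V P τ t x‖ ^ p)
      ≤ ENNReal.ofReal (D * (t + 1) ^ (p * ε) * ‖x‖ ^ p)

section

variable {U V : ℝ → ℝ → X →L[ℝ] X} {P : ℝ → X →L[ℝ] X} {s τ t : ℝ}

theorem greenFunction_of_gt (h : s < t) : greenFunction U V P t s = (U t s).comp (P s) :=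
  if_pos h

theorem greenFunction_of_lt (h : t < s) :
    greenFunction U V P t s = -((V t s).comp (1 - P s)) := by
  rw [greenFunction, if_neg h.not_gt, if_pos h]

theorem IsEvolutionOperator.tendsto_apply_nhdsGT (hU : IsEvolutionOperator U) (hs : 0 ≤ s)
    (y : X) : Tendsto (fun t => U t s y) (𝓝[>] s) (𝓝 y) := by
  have hcont := (hU.2.2 y (s, s) ⟨hs, le_rfl⟩).tendsto
  rw [hU.1 s hs, one_apply_eq_self] at hcont
  refine hcont.comp (f := fun t => (t, s)) (tendsto_nhdsWithin_iff.2 ⟨?_, ?_⟩)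
  · exact (tendsto_nhdsWithin_of_tendsto_nhds tendsto_id).prodMk_nhds tendsto_const_nhds
  · filter_upwards [self_mem_nhdsWithin] with t ht using ⟨hs, le_of_lt ht⟩

theorem CompatibleProjection.stable_comp_stable (hU : IsEvolutionOperator U)
    (hP : IsProjectionValued P) (hC : CompatibleProjection U V P)
    (hs : 0 ≤ s) (hsτ : s ≤ τ) (hτt : τ ≤ t) :
    ((U t τ).comp (P τ)).comp ((U τ s).comp (P s)) = (U t s).comp (P s) := by
  rw [ContinuousLinearMap.comp_assoc, ← ContinuousLinearMap.comp_assoc (P τ),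
    hC.1 s τ hs hsτ, ContinuousLinearMap.comp_assoc, hP.1 s hs,
    ← ContinuousLinearMap.comp_assoc, hU.2.1 s τ t hs hsτ hτt]

theorem CompatibleProjection.unstable_comp_unstable (hU : IsEvolutionOperator U)
    (hC : CompatibleProjection U V P) (hs : 0 ≤ s) (hsτ : s ≤ τ) (hτt : τ ≤ t) :
    ((V s τ).comp (1 - P τ)).comp ((V τ t).comp (1 - P t)) = (V s t).comp (1 - P t) := by
  have hτ : 0 ≤ τ := hs.trans hsτ
  ext x
  set y := V τ t ((1 - P t) x)
  set z := V s τ ((1 - P τ) y)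
  have hUz : U t s z = (1 - P t) x := by
    rw [← hU.2.1 s τ t hs hsτ hτt, ContinuousLinearMap.comp_apply, hC.2.2.1 s τ hs hsτ y,
      hC.2.1 τ t hτ hτt x, hC.2.2.1 τ t hτ hτt x]
  have hVUz := hC.2.2.2 s t hs (hsτ.trans hτt) z
  rw [hC.2.1 s τ hs hsτ y, hUz] at hVUz
  simp only [ContinuousLinearMap.comp_apply]
  exact hVUz.symm

theorem CompatibleProjection.unstable_self (hU : IsEvolutionOperator U)
    (hC : CompatibleProjection U V P) (hs : 0 ≤ s) : (V s s).comp (1 - P s) = 1 - P s := by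
  ext x
  simpa [hU.1 s hs] using hC.2.2.1 s s hs le_rfl x

end

section

variable {U V : ℝ → ℝ → X →L[ℝ] X} {P : ℝ → X →L[ℝ] X} {M ω α s τ t : ℝ}

theorem PolynomialGreenBound.norm_stable_le_of_lt (hG : PolynomialGreenBound U V P M ω α)
    (hω : 0 ≤ ω) (hM : 0 ≤ M) (hs : 0 ≤ s) (hst : s < t) (hnear : t + 1 ≤ 2 * (s + 1)) :
    ‖(U t s).comp (P s)‖ ≤ M * 2 ^ ω * (s + 1) ^ α := by
  have ht : 0 ≤ t := hs.trans hst.le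
  have h := hG t s ht hs hst.ne'
  rw [greenFunction_of_gt hst, Real.sign_of_pos (sub_pos.2 hst), mul_one] at h
  have hs1 : 1 / (s + 1) ≤ 1 := by rw [div_le_one (by positivity)]; linarith
  have hratio : ((t + 1) / (s + 1)) ^ ω ≤ 2 ^ ω :=
    Real.rpow_le_rpow (by positivity) ((div_le_iff₀ (by positivity)).2 hnear) hω
  calc _ ≤ _ := h
    _ ≤ M * 1 * 2 ^ ω * (s + 1) ^ α := by gcongr
    _ = M * 2 ^ ω * (s + 1) ^ α := by ring

theorem PolynomialGreenBound.norm_unstable_le_of_lt (hG : PolynomialGreenBound U V P M ω α)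
    (hω : 0 ≤ ω) (hM : 0 ≤ M) (hs : 0 ≤ s) (hst : s < t) (hnear : t + 1 ≤ 2 * (s + 1)) :
    ‖(V s t).comp (1 - P t)‖ ≤ M * 2 ^ ω * (t + 1) ^ α := by
  have ht : 0 ≤ t := hs.trans hst.le
  have h := hG s t hs ht hst.ne
  rw [greenFunction_of_lt hst, norm_neg, Real.sign_of_neg (sub_neg.2 hst), mul_neg_one,
    Real.rpow_neg (by positivity), ← Real.inv_rpow (by positivity), inv_div] at h
  have ht1 : 1 / (t + 1) ≤ 1 := by rw [div_le_one (by positivity)]; linarith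
  have hratio : ((t + 1) / (s + 1)) ^ ω ≤ 2 ^ ω :=
    Real.rpow_le_rpow (by positivity) ((div_le_iff₀ (by positivity)).2 hnear) hω
  calc _ ≤ _ := h
    _ ≤ M * 1 * 2 ^ ω * (t + 1) ^ α := by gcongr
    _ = M * 2 ^ ω * (t + 1) ^ α := by ring

theorem PolynomialGreenBound.norm_projection_le (hU : IsEvolutionOperator U)
    (hG : PolynomialGreenBound U V P M ω α) (hω : 0 ≤ ω) (hM : 0 ≤ M) (hs : 0 ≤ s) :
    ‖P s‖ ≤ M * 2 ^ ω * (s + 1) ^ α := by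
  refine ContinuousLinearMap.opNorm_le_bound _ (by positivity) fun x => ?_
  refine le_of_tendsto (hU.tendsto_apply_nhdsGT hs (P s x)).norm ?_
  filter_upwards [Ioc_mem_nhdsGT (lt_add_one s)] with t ht
  calc ‖U t s (P s x)‖ ≤ ‖(U t s).comp (P s)‖ * ‖x‖ := ((U t s).comp (P s)).le_opNorm x
    _ ≤ M * 2 ^ ω * (s + 1) ^ α * ‖x‖ := by
        gcongr
        exact hG.norm_stable_le_of_lt hω hM hs ht.1 (by linarith [ht.2])

theorem PolynomialGreenBound.norm_stable_le_of_le (hU : IsEvolutionOperator U)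
    (hG : PolynomialGreenBound U V P M ω α) (hω : 0 ≤ ω) (hM : 0 ≤ M)
    (hs : 0 ≤ s) (hst : s ≤ t) (hnear : t + 1 ≤ 2 * (s + 1)) :
    ‖(U t s).comp (P s)‖ ≤ (1 + M * 2 ^ ω) * (s + 1) ^ α := by
  have hK : M * 2 ^ ω * (s + 1) ^ α ≤ (1 + M * 2 ^ ω) * (s + 1) ^ α :=
    mul_le_mul_of_nonneg_right (by linarith) (Real.rpow_nonneg (by linarith) α)
  rcases hst.lt_or_eq with hst | rfl
  · exact (hG.norm_stable_le_of_lt hω hM hs hst hnear).trans hK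
  · rw [hU.1 s hs, ContinuousLinearMap.one_def, ContinuousLinearMap.id_comp]
    exact (hG.norm_projection_le hU hω hM hs).trans hK

theorem PolynomialGreenBound.norm_unstable_le_of_le (hU : IsEvolutionOperator U)
    (hC : CompatibleProjection U V P) (hG : PolynomialGreenBound U V P M ω α) (hω : 0 ≤ ω)
    (hα : 0 ≤ α) (hM : 0 ≤ M) (hs : 0 ≤ s) (hst : s ≤ t) (hnear : t + 1 ≤ 2 * (s + 1)) :
    ‖(V s t).comp (1 - P t)‖ ≤ (1 + M * 2 ^ ω) * (t + 1) ^ α := by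
  rcases hst.lt_or_eq with hst | rfl
  · exact (hG.norm_unstable_le_of_lt hω hM hs hst hnear).trans
      (mul_le_mul_of_nonneg_right (by linarith) (Real.rpow_nonneg (by linarith) α))
  · have hone : 1 ≤ (s + 1) ^ α := Real.one_le_rpow (by linarith) hα
    rw [hC.unstable_self hU hs]
    calc ‖1 - P s‖ ≤ ‖(1 : X →L[ℝ] X)‖ + ‖P s‖ := norm_sub_le _ _
      _ ≤ 1 + M * 2 ^ ω * (s + 1) ^ α :=
          add_le_add ContinuousLinearMap.norm_id_le (hG.norm_projection_le hU hω hM hs)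
      _ ≤ (1 + M * 2 ^ ω) * (s + 1) ^ α := by nlinarith


theorem PolynomialGreenBound.norm_stable_apply_le_greenFunction (hU : IsEvolutionOperator U)
    (hP : IsProjectionValued P) (hC : CompatibleProjection U V P)
    (hG : PolynomialGreenBound U V P M ω α) (hω : 0 ≤ ω) (hα : 0 ≤ α) (hM : 0 ≤ M)
    (hs : 0 ≤ s) (hsτ : s < τ) (hτt : τ ≤ t) (hnear : t + 1 ≤ 2 * (τ + 1)) (x : X) :
    ‖U t s (P s x)‖ ≤ (1 + M * 2 ^ ω) * (t + 1) ^ α * ‖greenFunction U V P τ s x‖ := by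
  have hτ : 0 ≤ τ := hs.trans hsτ.le
  calc ‖U t s (P s x)‖
      = ‖((U t τ).comp (P τ)) (greenFunction U V P τ s x)‖ := by
        show ‖((U t s).comp (P s)) x‖ = _
        rw [greenFunction_of_gt hsτ, ← hC.stable_comp_stable hU hP hs hsτ.le hτt]
        rfl
    _ ≤ ‖(U t τ).comp (P τ)‖ * ‖greenFunction U V P τ s x‖ := ContinuousLinearMap.le_opNorm _ _
    _ ≤ (1 + M * 2 ^ ω) * (t + 1) ^ α * ‖greenFunction U V P τ s x‖ := by
        gcongr
        calc _ ≤ (1 + M * 2 ^ ω) * (τ + 1) ^ α := hG.norm_stable_le_of_le hU hω hM hτ hτt hnear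
          _ ≤ (1 + M * 2 ^ ω) * (t + 1) ^ α := by gcongr

theorem PolynomialGreenBound.norm_unstable_apply_le_greenFunction (hU : IsEvolutionOperator U)
    (hC : CompatibleProjection U V P) (hG : PolynomialGreenBound U V P M ω α) (hω : 0 ≤ ω)
    (hα : 0 ≤ α) (hM : 0 ≤ M) (hs : 0 ≤ s) (hsτ : s ≤ τ) (hτt : τ < t)
    (hnear : τ + 1 ≤ 2 * (s + 1)) (x : X) :
    ‖V s t ((1 - P t) x)‖ ≤ (1 + M * 2 ^ ω) * (t + 1) ^ α * ‖greenFunction U V P τ t x‖ := by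
  have hτ : 0 ≤ τ := hs.trans hsτ
  calc ‖V s t ((1 - P t) x)‖
      = ‖((V s τ).comp (1 - P τ)) (-greenFunction U V P τ t x)‖ := by
        show ‖((V s t).comp (1 - P t)) x‖ = _
        rw [greenFunction_of_lt hτt, neg_apply, neg_neg,
          ← hC.unstable_comp_unstable hU hs hsτ hτt.le]
        rfl
    _ ≤ ‖(V s τ).comp (1 - P τ)‖ * ‖greenFunction U V P τ t x‖ := by
        rw [← norm_neg (greenFunction U V P τ t x)]
        exact ContinuousLinearMap.le_opNorm _ _
    _ ≤ (1 + M * 2 ^ ω) * (t + 1) ^ α * ‖greenFunction U V P τ t x‖ := by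
        gcongr
        calc _ ≤ (1 + M * 2 ^ ω) * (τ + 1) ^ α :=
              hG.norm_unstable_le_of_le hU hC hω hα hM hs hsτ hnear
          _ ≤ (1 + M * 2 ^ ω) * (t + 1) ^ α := by gcongr
end

section

variable {U V : ℝ → ℝ → X →L[ℝ] X} {P : ℝ → X →L[ℝ] X} {M ω α p γ ε D s t : ℝ}

theorem PolynomialGreenIntegralBound.lintegral_le
    (hint : PolynomialGreenIntegralBound U V P p γ ε D)
    (ht : 0 ≤ t) (x : X) :
    ∫⁻ τ in Set.Ioi (0 : ℝ), ENNReal.ofReal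
        (1 / (τ + 1) * ((τ + 1) / (t + 1)) ^ (p * γ * Real.sign (τ - t)) *
          ‖greenFunction U V P τ t x‖ ^ p)
      ≤ ENNReal.ofReal (D * ((t + 1) ^ ε * ‖x‖) ^ p) := by
  rw [Real.mul_rpow (by positivity) (norm_nonneg x), ← Real.rpow_mul (by positivity), mul_comm ε,
    ← mul_assoc]
  exact hint t ht x

theorem PolynomialGreenIntegralBound.norm_stable_apply_le_of_far (hU : IsEvolutionOperator U)
    (hP : IsProjectionValued P) (hC : CompatibleProjection U V P)
    (hG : PolynomialGreenBound U V P M ω α) (hint : PolynomialGreenIntegralBound U V P p γ ε D)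
    (hω : 0 ≤ ω) (hα : 0 ≤ α) (hM : 0 ≤ M) (hp : 0 < p) (hγ : 0 ≤ γ) (hD : 0 ≤ D)
    (hs : 0 ≤ s) (hfar : 2 * (s + 1) ≤ t + 1) (x : X) :
    ‖U t s (P s x)‖ ≤ 2 ^ γ * ((t + 1) / (s + 1)) ^ (-γ) *
      ((2 * D) ^ (1 / p) * ((s + 1) ^ ε * ‖x‖) * ((1 + M * 2 ^ ω) * (t + 1) ^ α)) := by
  have ht : 0 ≤ t := by linarith
  refine le_two_rpow_mul_rpow_neg_mul (by positivity) ?_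
  have key := mul_le_of_setLIntegral_rpow_le (μ := volume) (J := Set.Ioo ((t - 1) / 2) t)
    (A := ‖U t s (P s x)‖) (B := (1 + M * 2 ^ ω) * (t + 1) ^ α) (L := (t + 1) / 2)
    (c := 1 / (t + 1)) (θ := ((t + 1) / (s + 1) / 2) ^ γ) measurableSet_Ioo
    (fun τ hτ => Set.mem_Ioi.2 (by linarith [hτ.1])) (by rw [Real.volume_Ioo]; ring_nf)
    (by linarith) (norm_nonneg _) (by positivity) (by positivity) (by positivity) hD
    (by positivity) hp ?_ ?_ (hint.lintegral_le hs x)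
  · convert key using 3
    field_simp
  · intro τ ⟨hτ₁, hτ₂⟩
    exact hG.norm_stable_apply_le_greenFunction hU hP hC hω hα hM hs (by linarith) hτ₂.le
      (by linarith) x
  · intro τ ⟨hτ₁, hτ₂⟩
    have hsτ : s < τ := by linarith
    have hτ : 0 ≤ τ := by linarith
    rw [Real.sign_of_pos (sub_pos.2 hsτ), mul_one, ← Real.rpow_mul (by positivity), mul_comm γ]
    have hweight : 1 / (t + 1) ≤ 1 / (τ + 1) :=
      one_div_le_one_div_of_le (by positivity) (by linarith)
    have hratio : (t + 1) / (s + 1) / 2 ≤ (τ + 1) / (s + 1) := by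
      rw [div_div, div_le_div_iff₀ (by positivity) (by positivity)]
      nlinarith
    exact mul_le_mul hweight (Real.rpow_le_rpow (by positivity) hratio (by positivity))
      (by positivity) (by positivity)

theorem PolynomialGreenIntegralBound.norm_unstable_apply_le_of_far (hU : IsEvolutionOperator U)
    (hC : CompatibleProjection U V P)
    (hG : PolynomialGreenBound U V P M ω α) (hint : PolynomialGreenIntegralBound U V P p γ ε D)
    (hω : 0 ≤ ω) (hα : 0 ≤ α) (hM : 0 ≤ M) (hp : 0 < p) (hγ : 0 ≤ γ) (hD : 0 ≤ D)
    (hs : 0 ≤ s) (hfar : 2 * (s + 1) ≤ t + 1) (x : X) :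
    ‖V s t ((1 - P t) x)‖ ≤ 2 ^ γ * ((t + 1) / (s + 1)) ^ (-γ) *
      ((2 * D) ^ (1 / p) * ((t + 1) ^ ε * ‖x‖) * ((1 + M * 2 ^ ω) * (t + 1) ^ α)) := by
  have ht : 0 ≤ t := by linarith
  refine le_two_rpow_mul_rpow_neg_mul (by positivity) ?_
  have key := mul_le_of_setLIntegral_rpow_le (μ := volume) (J := Set.Ioo s (2 * s + 1))
    (A := ‖V s t ((1 - P t) x)‖) (B := (1 + M * 2 ^ ω) * (t + 1) ^ α) (L := s + 1)
    (c := 1 / (2 * (s + 1))) (θ := ((t + 1) / (s + 1) / 2) ^ γ) measurableSet_Ioo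
    (fun τ hτ => Set.mem_Ioi.2 (by linarith [hτ.1])) (by rw [Real.volume_Ioo]; ring_nf)
    (by linarith) (norm_nonneg _) (by positivity) (by positivity) (by positivity) hD
    (by positivity) hp ?_ ?_ (hint.lintegral_le ht x)
  · convert key using 3
    field_simp
  · intro τ ⟨hτ₁, hτ₂⟩
    exact hG.norm_unstable_apply_le_greenFunction hU hC hω hα hM hs hτ₁.le (by linarith)
      (by linarith) x
  · intro τ ⟨hτ₁, hτ₂⟩
    have hτt : τ < t := by linarith
    have hτ : 0 ≤ τ := by linarith
    rw [Real.sign_of_neg (sub_neg.2 hτt), mul_neg_one, Real.rpow_neg (by positivity),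
      ← Real.inv_rpow (by positivity), inv_div, ← Real.rpow_mul (by positivity), mul_comm γ]
    have hweight : 1 / (2 * (s + 1)) ≤ 1 / (τ + 1) :=
      one_div_le_one_div_of_le (by positivity) (by linarith)
    have hratio : (t + 1) / (s + 1) / 2 ≤ (t + 1) / (τ + 1) := by
      rw [div_div, div_le_div_iff₀ (by positivity) (by positivity)]
      nlinarith
    exact mul_le_mul hweight (Real.rpow_le_rpow (by positivity) hratio (by positivity))
      (by positivity) (by positivity)

theorem PolynomialGreenIntegralBound.norm_stable_le (hU : IsEvolutionOperator U)
    (hP : IsProjectionValued P) (hC : CompatibleProjection U V P)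
    (hG : PolynomialGreenBound U V P M ω α) (hint : PolynomialGreenIntegralBound U V P p γ ε D)
    (hω : 0 ≤ ω) (hα : 0 ≤ α) (hM : 0 ≤ M) (hp : 0 < p) (hαγ : α ≤ γ) (hε : 0 ≤ ε) (hD : 0 ≤ D)
    (hs : 0 ≤ s) (hst : s ≤ t) :
    ‖(U t s).comp (P s)‖ ≤ (1 + M * 2 ^ ω) * 2 ^ γ * max 1 ((2 * D) ^ (1 / p)) *
      ((t + 1) / (s + 1)) ^ (-(γ - α)) * (s + 1) ^ (α + ε) := by
  set K := 1 + M * 2 ^ ω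
  set C := max 1 ((2 * D) ^ (1 / p))
  have hK : 0 < K := by positivity
  have hCpos : 0 < C := lt_max_of_lt_left one_pos
  set r := (t + 1) / (s + 1) with hr_def
  have hr : 0 < r := div_pos (by linarith) (by linarith)
  rcases le_or_gt (t + 1) (2 * (s + 1)) with hnear | hfar
  · have hr2 : r ≤ 2 := (div_le_iff₀ (by positivity)).2 hnear
    have hKC : K ≤ K * (C * (2 ^ γ * r ^ (-(γ - α)))) :=
      le_mul_of_one_le_right hK.le (one_le_mul_of_one_le_of_one_le (le_max_left _ _)
        (one_le_two_rpow_mul_rpow_neg hr hr2 (by linarith) (by linarith)))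
    calc ‖(U t s).comp (P s)‖ ≤ K * (s + 1) ^ α := hG.norm_stable_le_of_le hU hω hM hs hst hnear
      _ ≤ K * (C * (2 ^ γ * r ^ (-(γ - α)))) * (s + 1) ^ (α + ε) :=
          mul_le_mul hKC (Real.rpow_le_rpow_of_exponent_le (by linarith) (by linarith))
            (by positivity) (by positivity)
      _ = K * 2 ^ γ * C * r ^ (-(γ - α)) * (s + 1) ^ (α + ε) := by ring
  · refine ContinuousLinearMap.opNorm_le_bound _ (by positivity) fun x => ?_
    have htr : t + 1 = r * (s + 1) := by rw [hr_def]; field_simp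
    calc ‖((U t s).comp (P s)) x‖
        ≤ 2 ^ γ * r ^ (-γ) * ((2 * D) ^ (1 / p) * ((s + 1) ^ ε * ‖x‖) * (K * (t + 1) ^ α)) :=
          hint.norm_stable_apply_le_of_far hU hP hC hG hω hα hM hp (hα.trans hαγ) hD hs hfar.le x
      _ = K * 2 ^ γ * (2 * D) ^ (1 / p) * (r ^ (-γ) * r ^ α) * ((s + 1) ^ α * (s + 1) ^ ε) *
            ‖x‖ := by
          rw [htr, Real.mul_rpow hr.le (by positivity)]
          ring
      _ = K * 2 ^ γ * (2 * D) ^ (1 / p) * r ^ (-(γ - α)) * (s + 1) ^ (α + ε) * ‖x‖ := by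
          rw [← Real.rpow_add hr, ← Real.rpow_add (by positivity), show -γ + α = -(γ - α) by ring]
      _ ≤ K * 2 ^ γ * C * r ^ (-(γ - α)) * (s + 1) ^ (α + ε) * ‖x‖ := by
          gcongr
          exact le_max_right _ _

theorem PolynomialGreenIntegralBound.norm_unstable_le (hU : IsEvolutionOperator U)
    (hC : CompatibleProjection U V P)
    (hG : PolynomialGreenBound U V P M ω α) (hint : PolynomialGreenIntegralBound U V P p γ ε D)
    (hω : 0 ≤ ω) (hα : 0 ≤ α) (hM : 0 ≤ M) (hp : 0 < p) (hγ : 0 ≤ γ) (hε : 0 ≤ ε) (hD : 0 ≤ D)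
    (hs : 0 ≤ s) (hst : s ≤ t) :
    ‖(V s t).comp (1 - P t)‖ ≤ (1 + M * 2 ^ ω) * 2 ^ γ * max 1 ((2 * D) ^ (1 / p)) *
      ((t + 1) / (s + 1)) ^ (-γ) * (t + 1) ^ (α + ε) := by
  set K := 1 + M * 2 ^ ω
  set C := max 1 ((2 * D) ^ (1 / p))
  have hK : 0 < K := by positivity
  have hCpos : 0 < C := lt_max_of_lt_left one_pos
  set r := (t + 1) / (s + 1)
  have hr : 0 < r := div_pos (by linarith) (by linarith)
  have ht : 0 ≤ t := hs.trans hst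
  rcases le_or_gt (t + 1) (2 * (s + 1)) with hnear | hfar
  · have hr2 : r ≤ 2 := (div_le_iff₀ (by positivity)).2 hnear
    have hKC : K ≤ K * (C * (2 ^ γ * r ^ (-γ))) :=
      le_mul_of_one_le_right hK.le (one_le_mul_of_one_le_of_one_le (le_max_left _ _)
        (one_le_two_rpow_mul_rpow_neg hr hr2 hγ le_rfl))
    calc ‖(V s t).comp (1 - P t)‖ ≤ K * (t + 1) ^ α :=
          hG.norm_unstable_le_of_le hU hC hω hα hM hs hst hnear
      _ ≤ K * (C * (2 ^ γ * r ^ (-γ))) * (t + 1) ^ (α + ε) :=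
          mul_le_mul hKC (Real.rpow_le_rpow_of_exponent_le (by linarith) (by linarith))
            (by positivity) (by positivity)
      _ = K * 2 ^ γ * C * r ^ (-γ) * (t + 1) ^ (α + ε) := by ring
  · refine ContinuousLinearMap.opNorm_le_bound _ (by positivity) fun x => ?_
    calc ‖((V s t).comp (1 - P t)) x‖
        ≤ 2 ^ γ * r ^ (-γ) * ((2 * D) ^ (1 / p) * ((t + 1) ^ ε * ‖x‖) * (K * (t + 1) ^ α)) :=
          hint.norm_unstable_apply_le_of_far hU hC hG hω hα hM hp hγ hD hs hfar.le x
      _ = K * 2 ^ γ * (2 * D) ^ (1 / p) * r ^ (-γ) * (t + 1) ^ (α + ε) * ‖x‖ := by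
          rw [Real.rpow_add (by positivity)]
          ring
      _ ≤ K * 2 ^ γ * C * r ^ (-γ) * (t + 1) ^ (α + ε) * ‖x‖ := by
          gcongr
          exact le_max_right _ _

end

theorem integral_estimate_implies_polynomial_dichotomy_general
    {X : Type*} [NormedAddCommGroup X] [NormedSpace ℝ X]
    (U V : ℝ → ℝ → X →L[ℝ] X) (P : ℝ → X →L[ℝ] X)
    (hU : IsEvolutionOperator U) (hP : IsProjectionValued P)
    (hC : CompatibleProjection U V P)
    (M ω α : ℝ) (hω : 0 < ω) (hα : 0 ≤ α) (hM : 1 ≤ M)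
    (hG : ∀ t s, 0 ≤ t → 0 ≤ s → t ≠ s →
      ‖greenFunction U V P t s‖ ≤
        M * (1 / (s + 1)) * ((t + 1) / (s + 1)) ^ (ω * Real.sign (t - s)) * (s + 1) ^ α)
    (p γ ε D : ℝ) (hp : 1 ≤ p) (hγ : α < γ) (hε : 0 ≤ ε) (hD : 0 < D)
    (hint : ∀ t, 0 ≤ t → ∀ x : X,
      ∫⁻ τ in Set.Ioi (0 : ℝ), ENNReal.ofReal
          (1 / (τ + 1) * ((τ + 1) / (t + 1)) ^ (p * γ * Real.sign (τ - t)) *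
            ‖greenFunction U V P τ t x‖ ^ p)
        ≤ ENNReal.ofReal (D * (t + 1) ^ (p * ε) * ‖x‖ ^ p)) :
    ∃ a b ε' N₁ N₂ : ℝ, 0 < a ∧ 0 < b ∧ 0 ≤ ε' ∧ 1 ≤ N₁ ∧ 1 ≤ N₂ ∧
      ∀ s t, 0 ≤ s → s ≤ t →
        ‖(U t s).comp (P s)‖ ≤ N₁ * ((t + 1) / (s + 1)) ^ (-a) * (s + 1) ^ ε' ∧
        ‖(V s t).comp (1 - P t)‖ ≤ N₂ * ((t + 1) / (s + 1)) ^ (-b) * (t + 1) ^ ε' := by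
  have hM0 : 0 ≤ M := by linarith
  have hN : 1 ≤ (1 + M * 2 ^ ω) * 2 ^ γ * max 1 ((2 * D) ^ (1 / p)) :=
    one_le_mul_of_one_le_of_one_le
      (one_le_mul_of_one_le_of_one_le (le_add_of_nonneg_right (by positivity))
        (Real.one_le_rpow one_le_two (by linarith)))
      (le_max_left _ _)
  refine ⟨γ - α, γ, α + ε, _, _, by linarith, by linarith, by linarith, hN, hN,
    fun s t hs hst => ⟨?_, ?_⟩⟩
  · exact PolynomialGreenIntegralBound.norm_stable_le hU hP hC hG hint hω.le hα hM0
      (by linarith) hγ.le hε hD.le hs hst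
  · exact PolynomialGreenIntegralBound.norm_unstable_le hU hC hG hint hω.le hα hM0
      (by linarith) (by linarith) hε hD.le hs hst

/-- Corollary 3.4 (the polynomial case `μ(t) = t + 1`): if
`‖G(t,s)‖ ≤ M (1/(s+1)) ((t+1)/(s+1))^{ω sign(t-s)} (s+1)^α` for `t ≠ s` and
`∫₀^∞ (1/(τ+1)) ((τ+1)/(t+1))^{pγ sign(τ-t)} ‖G(τ,t)x‖^p dτ ≤ D (t+1)^{pε} ‖x‖^p`,
then `U` has a nonuniform polynomial dichotomy with projection valued function `P`. -/
theorem integral_estimate_implies_polynomial_dichotomy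
    {X : Type*} [NormedAddCommGroup X] [NormedSpace ℝ X] [CompleteSpace X]
    (U V : ℝ → ℝ → X →L[ℝ] X) (P : ℝ → X →L[ℝ] X)
    (hU : IsEvolutionOperator U) (hP : IsProjectionValued P)
    (hC : CompatibleProjection U V P)
    (M ω α : ℝ) (hω : 0 < ω) (hα : 0 ≤ α) (hM : 1 ≤ M)
    (hG : ∀ t s, 0 ≤ t → 0 ≤ s → t ≠ s →
      ‖greenFunction U V P t s‖ ≤
        M * (1 / (s + 1)) * ((t + 1) / (s + 1)) ^ (ω * Real.sign (t - s)) * (s + 1) ^ α)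
    (p γ ε D : ℝ) (hp : 1 ≤ p) (hγ : α < γ) (hε : 0 ≤ ε) (hD : 0 < D)
    (hint : ∀ t, 0 ≤ t → ∀ x : X,
      ∫⁻ τ in Set.Ioi (0 : ℝ), ENNReal.ofReal
          (1 / (τ + 1) * ((τ + 1) / (t + 1)) ^ (p * γ * Real.sign (τ - t)) *
            ‖greenFunction U V P τ t x‖ ^ p)
        ≤ ENNReal.ofReal (D * (t + 1) ^ (p * ε) * ‖x‖ ^ p)) :
    ∃ a b ε' N₁ N₂ : ℝ, 0 < a ∧ 0 < b ∧ 0 ≤ ε' ∧ 1 ≤ N₁ ∧ 1 ≤ N₂ ∧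
      ∀ s t, 0 ≤ s → s ≤ t →
        ‖(U t s).comp (P s)‖ ≤ N₁ * ((t + 1) / (s + 1)) ^ (-a) * (s + 1) ^ ε' ∧
        ‖(V s t).comp (1 - P t)‖ ≤ N₂ * ((t + 1) / (s + 1)) ^ (-b) * (t + 1) ^ ε' :=
  integral_estimate_implies_polynomial_dichotomy_general U V P hU hP hC M ω α hω hα hM hG p γ ε D hp
    hγ hε hD hint
end
end

section
/- Let μ(t) = t + √(t²+1) for t ≥ 0, and let a,b > 1 and α ≥ 0 satisfy α + 1 < min{a,b}. Define the evolution operator U : Δ → B(ℝ²) by U(t,s)(x₁,x₂) = (U₁(t,s)x₁, U₂(t,s)x₂), where U₁(t,s) = (μ'(s)/μ'(t)) (μ(t)/μ(s))^{−a} e^{α sin²(s) log μ(s) − α sin²(t) log μ(t)} and U₂(t,s) = (μ'(s)/μ'(t)) (μ(s)/μ(t))^{−b} e^{α sin²(t) log μ(t) − α sin²(s) log μ(s)}, and let P(t)(x₁,x₂) = (x₁,0). Then P is a projection valued function compatible with U, and U has a nonuniform μ-dichotomy with projection valued function P. -/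
open Real MeasureTheory Filter

noncomputable section

variable {X : Type*} [NormedAddCommGroup X] [NormedSpace ℝ X]

/-!
On `Δ` the operator is diagonal with entries `f(t)/f(s)` and `g(t)/g(s)`, where
`f = e^{-A} μ^{-a} / μ'`, `g = e^{A} μ^{b} / μ'` and `A(t) = α sin² t log μ(t)`. Hence the cocycle
identity telescopes, and `U_Q(s,t)` is multiplication by `g(s)/g(t)` on the second coordinate.
Since `1 ≤ μ' ≤ 2` on `[0,∞)`, the quotients of derivatives are at most `2`, and
`0 ≤ A(t) ≤ α log μ(t)` gives `e^{A(s) - A(t)} ≤ μ(s)^α ≤ μ(t)^α`; this is the nonuniform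
dichotomy with `ε = α` and `N₁ = N₂ = 2`.
-/

def diagProd (c₁ c₂ : ℝ) : (ℝ × ℝ) →L[ℝ] (ℝ × ℝ) :=
  (c₁ • (1 : ℝ →L[ℝ] ℝ)).prodMap (c₂ • (1 : ℝ →L[ℝ] ℝ))

@[simp]
theorem diagProd_apply (c₁ c₂ : ℝ) (x : ℝ × ℝ) : diagProd c₁ c₂ x = (c₁ * x.1, c₂ * x.2) :=
  rfl

theorem diagProd_comp_diagProd (c₁ c₂ d₁ d₂ : ℝ) :
    (diagProd c₁ c₂).comp (diagProd d₁ d₂) = diagProd (c₁ * d₁) (c₂ * d₂) := by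
  ext <;> simp

theorem diagProd_one_one : diagProd 1 1 = 1 := by
  ext <;> simp

theorem one_sub_diagProd_one_zero : 1 - diagProd 1 0 = diagProd 0 1 := by
  ext <;> simp

theorem norm_diagProd_le (c₁ c₂ : ℝ) : ‖diagProd c₁ c₂‖ ≤ max |c₁| |c₂| := by
  refine ContinuousLinearMap.opNorm_le_bound _ (by positivity) fun x => ?_
  simp only [diagProd_apply, Prod.norm_def, norm_mul, Real.norm_eq_abs]
  exact max_le
    (mul_le_mul (le_max_left _ _) (le_max_left _ _) (abs_nonneg _) (by positivity))
    (mul_le_mul (le_max_right _ _) (le_max_right _ _) (abs_nonneg _) (by positivity))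

section DiagonalCocycle

variable {U : ℝ → ℝ → (ℝ × ℝ) →L[ℝ] (ℝ × ℝ)} {P : ℝ → (ℝ × ℝ) →L[ℝ] (ℝ × ℝ)} {f g : ℝ → ℝ}

theorem isEvolutionOperator_of_eq_diagProd
    (hU : ∀ s t, 0 ≤ s → s ≤ t → U t s = diagProd (f t / f s) (g t / g s))
    (hf : ∀ t, 0 ≤ t → f t ≠ 0) (hg : ∀ t, 0 ≤ t → g t ≠ 0)
    (hfc : ContinuousOn f (Set.Ici 0)) (hgc : ContinuousOn g (Set.Ici 0)) :
    IsEvolutionOperator U := by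
  refine ⟨fun t ht => ?_, fun s τ t hs hsτ hτt => ?_, fun x => ?_⟩
  · rw [hU t t ht le_rfl, div_self (hf t ht), div_self (hg t ht), diagProd_one_one]
  · have hτ := hs.trans hsτ
    rw [hU τ t hτ hτt, hU s τ hs hsτ, hU s t hs (hsτ.trans hτt), diagProd_comp_diagProd,
      div_mul_div_cancel₀ (hf τ hτ), div_mul_div_cancel₀ (hg τ hτ)]
  · have hquot : ∀ h : ℝ → ℝ, ContinuousOn h (Set.Ici 0) → (∀ t, 0 ≤ t → h t ≠ 0) →
        ContinuousOn (fun q : ℝ × ℝ => h q.1 / h q.2) {q | 0 ≤ q.2 ∧ q.2 ≤ q.1} :=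
      fun h hc h0 =>
        (hc.comp continuousOn_fst fun q hq => hq.1.trans hq.2).div
          (hc.comp continuousOn_snd fun q hq => hq.1) fun q hq => h0 _ hq.1
    refine ContinuousOn.congr (f := fun q : ℝ × ℝ => (f q.1 / f q.2 * x.1, g q.1 / g q.2 * x.2))
      (((hquot f hfc hf).mul continuousOn_const).prodMk
        ((hquot g hgc hg).mul continuousOn_const)) fun q hq => ?_
    rw [hU q.2 q.1 hq.1 hq.2, diagProd_apply]

theorem isProjectionValued_of_eq_diagProd (hP : ∀ t, 0 ≤ t → P t = diagProd 1 0) :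
    IsProjectionValued P := by
  refine ⟨fun t ht => by rw [hP t ht, diagProd_comp_diagProd, mul_one, mul_zero], fun x => ?_⟩
  exact continuousOn_const.congr fun t ht => by rw [hP t ht]

theorem compatibleProjection_of_eq_diagProd
    (hU : ∀ s t, 0 ≤ s → s ≤ t → U t s = diagProd (f t / f s) (g t / g s))
    (hP : ∀ t, 0 ≤ t → P t = diagProd 1 0) (hg : ∀ t, 0 ≤ t → g t ≠ 0) :
    CompatibleProjection U (fun s t => diagProd 0 (g s / g t)) P := by
  refine ⟨fun s t hs hst => ?_, fun s t hs hst x => ?_, fun s t hs hst x => ?_,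
    fun s t hs hst x => ?_⟩ <;> have ht := hs.trans hst
  · rw [hU s t hs hst, hP s hs, hP t ht, diagProd_comp_diagProd, diagProd_comp_diagProd,
      one_mul, mul_one, zero_mul, mul_zero]
  · rw [hP s hs, hP t ht, one_sub_diagProd_one_zero]
    simp
  · rw [hU s t hs hst, hP t ht, one_sub_diagProd_one_zero]
    simp only [diagProd_apply, zero_mul, one_mul, mul_zero, Prod.mk.injEq, true_and]
    field_simp [hg s hs, hg t ht]
  · rw [hU s t hs hst, hP s hs, one_sub_diagProd_one_zero]
    simp only [diagProd_apply, zero_mul, one_mul, mul_zero, Prod.mk.injEq, true_and]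
    field_simp [hg s hs, hg t ht]

theorem nonuniformMuDichotomy_of_eq_diagProd {μ : ℝ → ℝ} {a b ε N₁ N₂ : ℝ}
    (hU : ∀ s t, 0 ≤ s → s ≤ t → U t s = diagProd (f t / f s) (g t / g s))
    (hP : ∀ t, 0 ≤ t → P t = diagProd 1 0)
    (ha : 0 < a) (hb : 0 < b) (hε : 0 ≤ ε) (hN₁ : 1 ≤ N₁) (hN₂ : 1 ≤ N₂)
    (hf_le : ∀ s t, 0 ≤ s → s ≤ t → |f t / f s| ≤ N₁ * (μ t / μ s) ^ (-a) * μ s ^ ε)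
    (hg_le : ∀ s t, 0 ≤ s → s ≤ t → |g s / g t| ≤ N₂ * (μ t / μ s) ^ (-b) * μ t ^ ε) :
    NonuniformMuDichotomy μ U (fun s t => diagProd 0 (g s / g t)) P := by
  refine ⟨a, b, ε, N₁, N₂, ha, hb, hε, hN₁, hN₂, fun s t hs hst => ⟨?_, ?_⟩⟩
  · rw [hU s t hs hst, hP s hs, diagProd_comp_diagProd, mul_one, mul_zero]
    refine (norm_diagProd_le _ _).trans ?_
    simpa using hf_le s t hs hst
  · rw [hP t (hs.trans hst), one_sub_diagProd_one_zero, diagProd_comp_diagProd, mul_zero, mul_one]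
    refine (norm_diagProd_le _ _).trans ?_
    simpa using hg_le s t hs hst

end DiagonalCocycle

theorem rpow_neg_div_comm {x y : ℝ} (hx : 0 < x) (hy : 0 < y) (c : ℝ) :
    (x / y) ^ (-c) = (y / x) ^ c := by
  rw [rpow_neg (div_pos hx hy).le, ← inv_rpow (div_pos hx hy).le, inv_div]

section ExpWeight

variable {μ A : ℝ → ℝ} {c s t : ℝ}

def expWeight (μ A : ℝ → ℝ) (c t : ℝ) : ℝ := exp (A t) * μ t ^ c / deriv μ t

theorem expWeight_pos (hμ : 0 < μ t) (hd : 0 < deriv μ t) : 0 < expWeight μ A c t := by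
  unfold expWeight
  positivity

theorem expWeight_div_expWeight (hs : 0 < μ s) (ht : 0 < μ t) (hds : deriv μ s ≠ 0)
    (hdt : deriv μ t ≠ 0) :
    expWeight μ A c t / expWeight μ A c s =
      deriv μ s / deriv μ t * (μ t / μ s) ^ c * exp (A t - A s) := by
  rw [expWeight, expWeight, div_rpow ht.le hs.le, exp_sub]
  field_simp

theorem continuous_expWeight (hμ : Continuous μ) (hd : Continuous (deriv μ)) (hA : Continuous A)
    (hpos : ∀ t, 0 < μ t) (hd0 : ∀ t, deriv μ t ≠ 0) : Continuous (expWeight μ A c) :=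
  ((continuous_exp.comp hA).mul (hμ.rpow_const fun t => Or.inl (hpos t).ne')).div hd hd0

theorem eq_diagProd_expWeight {U : ℝ → ℝ → (ℝ × ℝ) →L[ℝ] (ℝ × ℝ)} {a b : ℝ}
    (hμ : ∀ t, 0 ≤ t → 0 < μ t) (hd : ∀ t, 0 ≤ t → deriv μ t ≠ 0)
    (hU : ∀ s t, 0 ≤ s → s ≤ t → ∀ x : ℝ × ℝ,
      U t s x = (deriv μ s / deriv μ t * (μ t / μ s) ^ (-a) * exp (A s - A t) * x.1,
        deriv μ s / deriv μ t * (μ s / μ t) ^ (-b) * exp (A t - A s) * x.2)) :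
    ∀ s t, 0 ≤ s → s ≤ t → U t s =
      diagProd (expWeight μ (fun t => -A t) (-a) t / expWeight μ (fun t => -A t) (-a) s)
        (expWeight μ A b t / expWeight μ A b s) := by
  intro s t hs hst
  have ht := hs.trans hst
  refine ContinuousLinearMap.ext fun x => ?_
  rw [hU s t hs hst, diagProd_apply,
    expWeight_div_expWeight (hμ s hs) (hμ t ht) (hd s hs) (hd t ht), neg_sub_neg,
    expWeight_div_expWeight (hμ s hs) (hμ t ht) (hd s hs) (hd t ht),
    rpow_neg_div_comm (hμ s hs) (hμ t ht)]

variable {α N : ℝ}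

theorem exp_sub_le_rpow (hA : ∀ t, 0 ≤ t → 0 ≤ A t ∧ A t ≤ α * log (μ t)) (hμ : 0 < μ s)
    (hs : 0 ≤ s) (ht : 0 ≤ t) : exp (A s - A t) ≤ μ s ^ α := by
  rw [rpow_def_of_pos hμ, mul_comm]
  exact exp_le_exp.mpr (by linarith [(hA t ht).1, (hA s hs).2])

theorem abs_expWeight_neg_div_le (hμ : ∀ t, 0 ≤ t → 0 < μ t) (hd : ∀ t, 0 ≤ t → 0 < deriv μ t)
    (hdN : ∀ s t, 0 ≤ s → 0 ≤ t → deriv μ s / deriv μ t ≤ N)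
    (hA : ∀ t, 0 ≤ t → 0 ≤ A t ∧ A t ≤ α * log (μ t)) (hs : 0 ≤ s) (hst : s ≤ t) :
    |expWeight μ (fun t => -A t) c t / expWeight μ (fun t => -A t) c s| ≤
      N * (μ t / μ s) ^ c * μ s ^ α := by
  have ht := hs.trans hst
  rw [abs_of_pos (div_pos (expWeight_pos (hμ t ht) (hd t ht)) (expWeight_pos (hμ s hs) (hd s hs))),
    expWeight_div_expWeight (hμ s hs) (hμ t ht) (hd s hs).ne' (hd t ht).ne', neg_sub_neg]
  have hr : 0 ≤ (μ t / μ s) ^ c := rpow_nonneg (div_pos (hμ t ht) (hμ s hs)).le _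
  have hN : 0 ≤ N := (div_pos (hd s hs) (hd t ht)).le.trans (hdN s t hs ht)
  exact mul_le_mul (mul_le_mul_of_nonneg_right (hdN s t hs ht) hr)
    (exp_sub_le_rpow hA (hμ s hs) hs ht) (exp_pos _).le (mul_nonneg hN hr)

theorem abs_expWeight_div_le (hμ : ∀ t, 0 ≤ t → 0 < μ t) (hmono : MonotoneOn μ (Set.Ici 0))
    (hd : ∀ t, 0 ≤ t → 0 < deriv μ t) (hdN : ∀ s t, 0 ≤ s → 0 ≤ t → deriv μ s / deriv μ t ≤ N)
    (hα : 0 ≤ α) (hA : ∀ t, 0 ≤ t → 0 ≤ A t ∧ A t ≤ α * log (μ t)) (hs : 0 ≤ s) (hst : s ≤ t) :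
    |expWeight μ A c s / expWeight μ A c t| ≤ N * (μ t / μ s) ^ (-c) * μ t ^ α := by
  have ht := hs.trans hst
  have hts := div_pos (hμ t ht) (hμ s hs)
  rw [abs_of_pos (div_pos (expWeight_pos (hμ s hs) (hd s hs)) (expWeight_pos (hμ t ht) (hd t ht))),
    expWeight_div_expWeight (hμ t ht) (hμ s hs) (hd t ht).ne' (hd s hs).ne',
    ← rpow_neg_div_comm (hμ t ht) (hμ s hs)]
  have hr : 0 ≤ (μ t / μ s) ^ (-c) := rpow_nonneg hts.le _
  have hN : 0 ≤ N := (div_pos (hd t ht) (hd s hs)).le.trans (hdN t s ht hs)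
  calc deriv μ t / deriv μ s * (μ t / μ s) ^ (-c) * exp (A s - A t)
      ≤ N * (μ t / μ s) ^ (-c) * μ s ^ α :=
        mul_le_mul (mul_le_mul_of_nonneg_right (hdN t s ht hs) hr)
          (exp_sub_le_rpow hA (hμ s hs) hs ht) (exp_pos _).le (mul_nonneg hN hr)
    _ ≤ N * (μ t / μ s) ^ (-c) * μ t ^ α :=
        mul_le_mul_of_nonneg_left (rpow_le_rpow (hμ s hs).le (hmono hs ht hst) hα)
          (mul_nonneg hN hr)

end ExpWeight

section SqrtGrowth

def sqrtGrowth (t : ℝ) : ℝ := t + √(t ^ 2 + 1)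

theorem abs_lt_sqrt_sq_add_one (t : ℝ) : |t| < √(t ^ 2 + 1) :=
  (lt_sqrt (abs_nonneg t)).mpr (by rw [sq_abs]; linarith)

theorem sqrtGrowth_pos (t : ℝ) : 0 < sqrtGrowth t := by
  have := abs_lt_sqrt_sq_add_one t
  have := neg_abs_le t
  unfold sqrtGrowth
  linarith

theorem one_le_sqrtGrowth {t : ℝ} (ht : 0 ≤ t) : 1 ≤ sqrtGrowth t := by
  have : 1 ≤ √(t ^ 2 + 1) := one_le_sqrt.mpr (by nlinarith)
  unfold sqrtGrowth
  linarith

theorem continuous_sqrtGrowth : Continuous sqrtGrowth := by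
  unfold sqrtGrowth
  fun_prop

theorem hasDerivAt_sqrtGrowth (t : ℝ) :
    HasDerivAt sqrtGrowth (1 + t / √(t ^ 2 + 1)) t := by
  have hinner : HasDerivAt (fun t : ℝ => t ^ 2 + 1) (2 * t) t := by
    simpa using (hasDerivAt_pow 2 t).add_const 1
  have h := (hasDerivAt_id' t).add (hinner.sqrt (by positivity))
  rwa [mul_div_mul_left _ _ two_ne_zero] at h

theorem deriv_sqrtGrowth : deriv sqrtGrowth = fun t => 1 + t / √(t ^ 2 + 1) :=
  funext fun t => (hasDerivAt_sqrtGrowth t).deriv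

theorem deriv_sqrtGrowth_pos (t : ℝ) : 0 < deriv sqrtGrowth t := by
  have hsqrt : 0 < √(t ^ 2 + 1) := sqrt_pos.mpr (by positivity)
  have : -1 < t / √(t ^ 2 + 1) := by
    rw [lt_div_iff₀ hsqrt]
    linarith [abs_lt_sqrt_sq_add_one t, neg_abs_le t]
  rw [deriv_sqrtGrowth]
  linarith

theorem one_le_deriv_sqrtGrowth {t : ℝ} (ht : 0 ≤ t) : 1 ≤ deriv sqrtGrowth t := by
  rw [deriv_sqrtGrowth]
  have : 0 ≤ t / √(t ^ 2 + 1) := by positivity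
  linarith

theorem deriv_sqrtGrowth_le_two (t : ℝ) : deriv sqrtGrowth t ≤ 2 := by
  have : t / √(t ^ 2 + 1) ≤ 1 :=
    (div_le_one (sqrt_pos.mpr (by positivity))).mpr
      ((le_abs_self t).trans (abs_lt_sqrt_sq_add_one t).le)
  rw [deriv_sqrtGrowth]
  linarith

theorem deriv_sqrtGrowth_div_le_two (s : ℝ) {t : ℝ} (ht : 0 ≤ t) :
    deriv sqrtGrowth s / deriv sqrtGrowth t ≤ 2 :=
  div_le_of_le_mul₀ (deriv_sqrtGrowth_pos t).le zero_le_two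
    (by nlinarith [deriv_sqrtGrowth_le_two s, one_le_deriv_sqrtGrowth ht])

theorem continuous_deriv_sqrtGrowth : Continuous (deriv sqrtGrowth) := by
  rw [deriv_sqrtGrowth]
  exact continuous_const.add
    (continuous_id.div (by fun_prop) fun t => (sqrt_pos.mpr (by positivity)).ne')

theorem strictMono_sqrtGrowth : StrictMono sqrtGrowth :=
  strictMono_of_deriv_pos deriv_sqrtGrowth_pos

theorem continuous_expWeight_sqrtGrowth {A : ℝ → ℝ} (hA : Continuous A) (c : ℝ) :
    Continuous (expWeight sqrtGrowth A c) :=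
  continuous_expWeight continuous_sqrtGrowth continuous_deriv_sqrtGrowth hA sqrtGrowth_pos
    fun t => (deriv_sqrtGrowth_pos t).ne'

end SqrtGrowth

theorem example_general_growth_rate_dichotomy_general
    (a b α : ℝ) (ha : 1 < a) (hb : 1 < b) (hα : 0 ≤ α)
    (μ : ℝ → ℝ) (hμ : ∀ t, μ t = t + Real.sqrt (t ^ 2 + 1))
    (U : ℝ → ℝ → (ℝ × ℝ) →L[ℝ] (ℝ × ℝ)) (P : ℝ → (ℝ × ℝ) →L[ℝ] (ℝ × ℝ))
    (hUdef : ∀ s t, 0 ≤ s → s ≤ t → ∀ x : ℝ × ℝ,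
      U t s x =
        (deriv μ s / deriv μ t * (μ t / μ s) ^ (-a) *
            Real.exp (α * Real.sin s ^ 2 * Real.log (μ s) -
              α * Real.sin t ^ 2 * Real.log (μ t)) * x.1,
         deriv μ s / deriv μ t * (μ s / μ t) ^ (-b) *
            Real.exp (α * Real.sin t ^ 2 * Real.log (μ t) -
              α * Real.sin s ^ 2 * Real.log (μ s)) * x.2))
    (hPdef : ∀ t, 0 ≤ t → ∀ x : ℝ × ℝ, P t x = (x.1, 0)) :
    IsEvolutionOperator U ∧ IsProjectionValued P ∧
      ∃ V : ℝ → ℝ → (ℝ × ℝ) →L[ℝ] (ℝ × ℝ),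
        CompatibleProjection U V P ∧ NonuniformMuDichotomy μ U V P := by
  obtain rfl : μ = sqrtGrowth := funext hμ
  set A : ℝ → ℝ := fun t => α * sin t ^ 2 * log (sqrtGrowth t)
  have hA : ∀ t, 0 ≤ t → 0 ≤ A t ∧ A t ≤ α * log (sqrtGrowth t) := fun t ht =>
    have hlog := log_nonneg (one_le_sqrtGrowth ht)
    ⟨by positivity, mul_le_mul_of_nonneg_right (mul_le_of_le_one_right hα (sin_sq_le_one t)) hlog⟩
  have hAc : Continuous A := by
    have := continuous_sqrtGrowth.log fun t => (sqrtGrowth_pos t).ne'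
    fun_prop
  have hμ₀ : ∀ t, 0 ≤ t → 0 < sqrtGrowth t := fun t _ => sqrtGrowth_pos t
  have hd : ∀ t, 0 ≤ t → 0 < deriv sqrtGrowth t := fun t _ => deriv_sqrtGrowth_pos t
  have hdN : ∀ s t, 0 ≤ s → 0 ≤ t → deriv sqrtGrowth s / deriv sqrtGrowth t ≤ 2 :=
    fun s _ _ ht => deriv_sqrtGrowth_div_le_two s ht
  have hw₀ : ∀ B c t, 0 ≤ t → expWeight sqrtGrowth B c t ≠ 0 :=
    fun B c t ht => (expWeight_pos (hμ₀ t ht) (hd t ht)).ne'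
  have hU := eq_diagProd_expWeight (A := A) hμ₀ (fun t ht => (hd t ht).ne') hUdef
  have hP : ∀ t, 0 ≤ t → P t = diagProd 1 0 :=
    fun t ht => ContinuousLinearMap.ext fun x => by simp [hPdef t ht]
  exact ⟨isEvolutionOperator_of_eq_diagProd hU (hw₀ _ _) (hw₀ _ _)
      (continuous_expWeight_sqrtGrowth hAc.neg _).continuousOn
      (continuous_expWeight_sqrtGrowth hAc _).continuousOn,
    isProjectionValued_of_eq_diagProd hP, _, compatibleProjection_of_eq_diagProd hU hP (hw₀ _ _),
    nonuniformMuDichotomy_of_eq_diagProd hU hP (by linarith) (by linarith) hα one_le_two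
      one_le_two (fun s t hs hst => abs_expWeight_neg_div_le hμ₀ hd hdN hA hs hst)
      (fun s t hs hst => abs_expWeight_div_le hμ₀ (strictMono_sqrtGrowth.monotone.monotoneOn _) hd
        hdN hα hA hs hst)⟩

/-- Example 3.5: with `μ(t) = t + √(t²+1)`, `a, b > 1`, `α ≥ 0`, `α + 1 < min{a,b}`,
the diagonal evolution operator given by
`U₁(t,s) = (μ'(s)/μ'(t)) (μ(t)/μ(s))^{-a} e^{α sin²(s) log μ(s) - α sin²(t) log μ(t)}` and
`U₂(t,s) = (μ'(s)/μ'(t)) (μ(s)/μ(t))^{-b} e^{α sin²(t) log μ(t) - α sin²(s) log μ(s)}`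
has a nonuniform μ-dichotomy with projection valued function `P(t)(x₁,x₂) = (x₁,0)`. -/
theorem example_general_growth_rate_dichotomy
    (a b α : ℝ) (ha : 1 < a) (hb : 1 < b) (hα : 0 ≤ α) (hab : α + 1 < min a b)
    (μ : ℝ → ℝ) (hμ : ∀ t, μ t = t + Real.sqrt (t ^ 2 + 1))
    (U : ℝ → ℝ → (ℝ × ℝ) →L[ℝ] (ℝ × ℝ)) (P : ℝ → (ℝ × ℝ) →L[ℝ] (ℝ × ℝ))
    (hUdef : ∀ s t, 0 ≤ s → s ≤ t → ∀ x : ℝ × ℝ,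
      U t s x =
        (deriv μ s / deriv μ t * (μ t / μ s) ^ (-a) *
            Real.exp (α * Real.sin s ^ 2 * Real.log (μ s) -
              α * Real.sin t ^ 2 * Real.log (μ t)) * x.1,
         deriv μ s / deriv μ t * (μ s / μ t) ^ (-b) *
            Real.exp (α * Real.sin t ^ 2 * Real.log (μ t) -
              α * Real.sin s ^ 2 * Real.log (μ s)) * x.2))
    (hPdef : ∀ t, 0 ≤ t → ∀ x : ℝ × ℝ, P t x = (x.1, 0)) :
    IsEvolutionOperator U ∧ IsProjectionValued P ∧
      ∃ V : ℝ → ℝ → (ℝ × ℝ) →L[ℝ] (ℝ × ℝ),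
        CompatibleProjection U V P ∧ NonuniformMuDichotomy μ U V P :=
  example_general_growth_rate_dichotomy_general a b α ha hb hα μ hμ U P hUdef hPdef
end
end

section
/- Let p ≥ 1 and let μ : [0,∞) → [1,∞) be a differentiable growth rate. If the evolution operator U : Δ → B(X) has a nonuniform μ-dichotomy with projection valued function P (with constants a,b > 0, ε ≥ 0, N₁,N₂ ≥ 1), then for every 0 < γ < min{a,b} and every H ∈ H^μ_{γ,p}(P) there exists a function L : [0,∞) × X → ℝ such that for all t ≥ s ≥ 0 and x ∈ X: (i) L(t, U(t,s)x) + ∫_s^t ‖H(τ)U(τ,s)x‖^p dτ ≤ L(s,x); (ii) L(t,P(t)x) ≥ 0 and L(t,Q(t)x) ≤ 0; (iii) μ(t)^{−pγ} L(t,P(t)x) − μ(t)^{pγ} L(t,Q(t)x) ≤ 2^{p−1} D μ(t)^{pε} ‖x‖^p, where D = N₁^p/(p(a−γ)) + N₂^p/(p(b−γ)). -/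
open Real MeasureTheory Filter

noncomputable section

variable {X : Type*} [NormedAddCommGroup X] [NormedSpace ℝ X]

/-!
Put `A(t,x) = ∫_t^∞ (μ'/μ)(τ) μ(τ)^{pγ} ‖U(τ,t)P(t)x‖^p dτ`,
`B(t,x) = ∫_0^t (μ'/μ)(τ) μ(τ)^{-pγ} ‖U_Q(τ,t)Q(t)x‖^p dτ` and `L = 2^{p-1} (A - B)`.
Moving along a trajectory from `s` to `t`, `A` loses and `B` gains the integrals over `[s,t]` of the
same weights evaluated on `U(τ,s)P(s)x` and `U(τ,s)Q(s)x`; by the bound defining `H^μ_{γ,p}(P)` and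
`(u + v)^p ≤ 2^{p-1} (u^p + v^p)`, `2^{p-1}` times their sum dominates `‖H(τ)U(τ,s)x‖^p`.
`A` vanishes on `Q(t)X` and `B` on `P(t)X`, which gives the signs. The dichotomy estimates bound
the integrands by multiples of `(μ'/μ) μ^c` with `c = p(γ - a) < 0` for `A` and `c = p(b - γ) > 0`
for `B`; since `μ^c / c` is a primitive, both integrals are controlled by `μ(t)^c / |c|`, which
yields the constant `D`.
-/

open Set

theorem Real.rpow_add_le_mul_rpow_add_rpow {x y p : ℝ} (hx : 0 ≤ x) (hy : 0 ≤ y) (hp : 1 ≤ p) :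
    (x + y) ^ p ≤ 2 ^ (p - 1) * (x ^ p + y ^ p) := by
  lift x to NNReal using hx
  lift y to NNReal using hy
  exact_mod_cast NNReal.rpow_add_le_mul_rpow_add_rpow x y hp

theorem Real.mul_rpow_mul_rpow_le_of_le_mul_div_rpow {u v w y K e c p : ℝ} (hu : 0 < u)
    (hv : 0 < v) (hw : 0 ≤ w) (hy : 0 ≤ y) (hp : 0 ≤ p) (h : y ≤ K * (u / v) ^ e) :
    w * u ^ c * y ^ p ≤ K ^ p * v ^ (-(p * e)) * (w * u ^ (c + p * e)) := by
  have hK : 0 ≤ K := nonneg_of_mul_nonneg_left (hy.trans h) (by positivity)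
  calc w * u ^ c * y ^ p ≤ w * u ^ c * (K * (u / v) ^ e) ^ p := by gcongr
    _ = K ^ p * v ^ (-(p * e)) * (w * u ^ (c + p * e)) := by
      rw [mul_rpow hK (by positivity), ← rpow_mul (by positivity), div_rpow hu.le hv.le,
        rpow_add hu, rpow_neg hv.le, mul_comm e p]
      ring

theorem Real.mul_rpow_mul_rpow_mul {N m n ε p : ℝ} (hN : 0 ≤ N) (hm : 0 ≤ m) (hn : 0 ≤ n) :
    (N * m ^ ε * n) ^ p = N ^ p * m ^ (p * ε) * n ^ p := by
  rw [mul_rpow (by positivity) hn, mul_rpow hN (by positivity), ← rpow_mul hm, mul_comm ε]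

theorem DifferentiableAt.hasDerivAt_rpow_div {f : ℝ → ℝ} {t c : ℝ} (hf : DifferentiableAt ℝ f t)
    (ht : f t ≠ 0) (hc : c ≠ 0) :
    HasDerivAt (fun u => f u ^ c / c) (logDeriv f t * f t ^ c) t := by
  refine ((hf.hasDerivAt.rpow_const (p := c) (Or.inl ht)).div_const c).congr_deriv ?_
  rw [logDeriv_apply, rpow_sub_one ht]
  field_simp

theorem aestronglyMeasurable_logDeriv_mul_rpow_mul {f g : ℝ → ℝ} {S : Set ℝ} (c : ℝ)
    (hS : MeasurableSet S) (hf : ContinuousOn f S) (hf0 : ∀ τ ∈ S, f τ ≠ 0)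
    (hg : ContinuousOn g S) :
    AEStronglyMeasurable (fun τ => logDeriv f τ * f τ ^ c * g τ) (volume.restrict S) := by
  have h : ContinuousOn (fun τ => (f τ)⁻¹ * f τ ^ c * g τ) S :=
    ((hf.inv₀ hf0).mul (hf.rpow_const fun τ hτ => Or.inl (hf0 τ hτ))).mul hg
  refine ((measurable_deriv f).aestronglyMeasurable.mul (h.aestronglyMeasurable hS)).congr
    (ae_of_all _ fun τ => ?_)
  simp only [Pi.mul_apply, logDeriv_apply]
  ring

theorem MeasureTheory.IntegrableOn.of_nonneg_of_le {α : Type*} [MeasurableSpace α]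
    {ν : Measure α} {f g : α → ℝ} {S : Set α} (hS : MeasurableSet S) (hg : IntegrableOn g S ν)
    (hf : AEStronglyMeasurable f (ν.restrict S)) (h0 : ∀ τ ∈ S, 0 ≤ f τ)
    (hle : ∀ τ ∈ S, f τ ≤ g τ) : IntegrableOn f S ν :=
  hg.mono' hf <| (ae_restrict_iff' hS).2 <| ae_of_all _ fun τ hτ => by
    rw [Real.norm_eq_abs, abs_of_nonneg (h0 τ hτ)]
    exact hle τ hτ

namespace IsGrowthRate

variable {μ : ℝ → ℝ}

theorem pos (hμ : IsGrowthRate μ) {t : ℝ} (ht : 0 ≤ t) : 0 < μ t :=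
  one_pos.trans_le (hμ.1 t ht)

theorem deriv_nonneg (hμ : IsGrowthRate μ) {t : ℝ} (ht : 0 ≤ t)
    (hd : DifferentiableAt ℝ μ t) : 0 ≤ deriv μ t := by
  refine hd.hasDerivAt.hasDerivWithinAt.nonneg_of_monotoneOn ?_
    (hμ.2.1.mono (Ici_subset_Ici.2 ht))
  rw [accPt_principal_iff_nhdsWithin, Ici_sdiff_left]
  infer_instance

theorem logDeriv_nonneg (hμ : IsGrowthRate μ) (hdiff : ∀ t, 0 ≤ t → DifferentiableAt ℝ μ t)
    {t : ℝ} (ht : 0 ≤ t) : 0 ≤ logDeriv μ t :=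
  div_nonneg (hμ.deriv_nonneg ht (hdiff t ht)) (hμ.pos ht).le

theorem logDeriv_mul_rpow_nonneg (hμ : IsGrowthRate μ)
    (hdiff : ∀ t, 0 ≤ t → DifferentiableAt ℝ μ t) {t : ℝ} (ht : 0 ≤ t) (c : ℝ) :
    0 ≤ logDeriv μ t * μ t ^ c :=
  mul_nonneg (hμ.logDeriv_nonneg hdiff ht) (rpow_nonneg (hμ.pos ht).le c)

theorem intervalIntegrable_logDeriv_mul_rpow (hμ : IsGrowthRate μ)
    (hdiff : ∀ t, 0 ≤ t → DifferentiableAt ℝ μ t) {c r t : ℝ} (hc : c ≠ 0) (hr : 0 ≤ r)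
    (hrt : r ≤ t) :
    IntervalIntegrable (fun τ => logDeriv μ τ * μ τ ^ c) volume r t := by
  have hderiv : ∀ τ, r ≤ τ → HasDerivAt (fun u => μ u ^ c / c) (logDeriv μ τ * μ τ ^ c) τ :=
    fun τ hτ => (hdiff τ (hr.trans hτ)).hasDerivAt_rpow_div (hμ.pos (hr.trans hτ)).ne' hc
  refine intervalIntegral.intervalIntegrable_deriv_of_nonneg
    (fun τ hτ => (hderiv τ ?_).continuousAt.continuousWithinAt)
    (fun τ hτ => hderiv τ ?_) (fun τ hτ => hμ.logDeriv_mul_rpow_nonneg hdiff ?_ c)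
  all_goals
    simp only [uIcc_of_le hrt, min_eq_left hrt, max_eq_right hrt, mem_Icc, mem_Ioo] at hτ
    linarith [hτ.1]

theorem integral_logDeriv_mul_rpow (hμ : IsGrowthRate μ)
    (hdiff : ∀ t, 0 ≤ t → DifferentiableAt ℝ μ t) {c r t : ℝ} (hc : c ≠ 0) (hr : 0 ≤ r)
    (hrt : r ≤ t) :
    ∫ τ in r..t, logDeriv μ τ * μ τ ^ c = (μ t ^ c - μ r ^ c) / c := by
  rw [intervalIntegral.integral_eq_sub_of_hasDerivAt (fun τ hτ => ?_)
    (hμ.intervalIntegrable_logDeriv_mul_rpow hdiff hc hr hrt), sub_div]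
  rw [uIcc_of_le hrt] at hτ
  exact (hdiff τ (hr.trans hτ.1)).hasDerivAt_rpow_div (hμ.pos (hr.trans hτ.1)).ne' hc

theorem integral_Ioi_logDeriv_mul_rpow (hμ : IsGrowthRate μ)
    (hdiff : ∀ t, 0 ≤ t → DifferentiableAt ℝ μ t) {c s : ℝ} (hc : c < 0) (hs : 0 ≤ s) :
    ∫ τ in Ioi s, logDeriv μ τ * μ τ ^ c = μ s ^ c / -c := by
  have hlim : Tendsto (fun u => μ u ^ c / c) atTop (nhds 0) := by
    simpa using ((tendsto_rpow_neg_atTop (neg_pos.2 hc)).comp hμ.2.2.2).div_const c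
  rw [integral_Ioi_of_hasDerivAt_of_nonneg' (fun τ hτ => ?_) (fun τ hτ => ?_) hlim, zero_sub,
    div_neg]
  · exact (hdiff τ (hs.trans hτ)).hasDerivAt_rpow_div (hμ.pos (hs.trans hτ)).ne' hc.ne
  · exact hμ.logDeriv_mul_rpow_nonneg hdiff (hs.trans hτ.le) c

theorem integrableOn_Ioi_logDeriv_mul_rpow (hμ : IsGrowthRate μ)
    (hdiff : ∀ t, 0 ≤ t → DifferentiableAt ℝ μ t) {c s : ℝ} (hc : c < 0) (hs : 0 ≤ s) :
    IntegrableOn (fun τ => logDeriv μ τ * μ τ ^ c) (Ioi s) := by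
  -- the value computed above is positive, whereas a non-integrable function has integral `0`
  refine Integrable.of_integral_ne_zero ?_
  rw [hμ.integral_Ioi_logDeriv_mul_rpow hdiff hc hs]
  exact (div_pos (rpow_pos_of_pos (hμ.pos hs) c) (neg_pos.2 hc)).ne'

end IsGrowthRate

theorem IsIdempotentElem.apply_apply {e : X →L[ℝ] X} (he : IsIdempotentElem e) (x : X) :
    e (e x) = e x := by
  rw [← mul_apply_eq_comp, he.eq]

theorem IsIdempotentElem.apply_one_sub_apply {e : X →L[ℝ] X} (he : IsIdempotentElem e) (x : X) :
    e ((1 - e) x) = 0 := by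
  rw [← mul_apply_eq_comp, he.mul_one_sub_self, zero_apply]

theorem IsIdempotentElem.one_sub_apply_apply {e : X →L[ℝ] X} (he : IsIdempotentElem e) (x : X) :
    (1 - e) (e x) = 0 := by
  rw [← mul_apply_eq_comp, he.one_sub_mul_self, zero_apply]

variable {U V : ℝ → ℝ → X →L[ℝ] X} {P : ℝ → X →L[ℝ] X} {r s τ t : ℝ}

theorem IsEvolutionOperator.apply_apply (hU : IsEvolutionOperator U) (hs : 0 ≤ s) (hsτ : s ≤ τ)
    (hτt : τ ≤ t) (x : X) : U t τ (U τ s x) = U t s x := by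
  rw [← ContinuousLinearMap.comp_apply, hU.2.1 s τ t hs hsτ hτt]

theorem IsEvolutionOperator.continuousOn_apply (hU : IsEvolutionOperator U) (hs : 0 ≤ s)
    (x : X) : ContinuousOn (fun τ => U τ s x) (Ici s) :=
  (hU.2.2 x).comp (continuous_id.prodMk continuous_const).continuousOn fun _ hτ => ⟨hs, hτ⟩

theorem IsProjectionValued.isIdempotentElem (hP : IsProjectionValued P) (ht : 0 ≤ t) :
    IsIdempotentElem (P t) :=
  hP.1 t ht

namespace CompatibleProjection

theorem apply_evolution (hC : CompatibleProjection U V P) (hs : 0 ≤ s) (hst : s ≤ t) (x : X) :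
    P t (U t s x) = U t s (P s x) := by
  rw [← ContinuousLinearMap.comp_apply, hC.1 s t hs hst, ContinuousLinearMap.comp_apply]

theorem compl_apply_evolution (hC : CompatibleProjection U V P) (hs : 0 ≤ s) (hst : s ≤ t)
    (x : X) : (1 - P t) (U t s x) = U t s ((1 - P s) x) := by
  simp only [sub_apply, one_apply_eq_self, map_sub, hC.apply_evolution hs hst]

theorem inv_apply_eq (hC : CompatibleProjection U V P) (hτ : 0 ≤ τ) (hτt : τ ≤ t) {y z : X}
    (hy : (1 - P τ) y = y) (hUy : U t τ y = (1 - P t) z) : V τ t ((1 - P t) z) = y := by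
  simpa only [hy, hUy] using hC.2.2.2 τ t hτ hτt y

theorem inv_apply_compl_evolution_of_le (hC : CompatibleProjection U V P)
    (hU : IsEvolutionOperator U) (hτ : 0 ≤ τ) (hτs : τ ≤ s) (hst : s ≤ t) (x : X) :
    V τ t ((1 - P t) (U t s x)) = V τ s ((1 - P s) x) := by
  refine hC.inv_apply_eq hτ (hτs.trans hst) (hC.2.1 τ s hτ hτs x) ?_
  rw [← hU.apply_apply hτ hτs hst, hC.2.2.1 τ s hτ hτs x,
    hC.compl_apply_evolution (hτ.trans hτs) hst]

theorem inv_apply_compl_evolution_of_ge (hC : CompatibleProjection U V P)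
    (hU : IsEvolutionOperator U) (hP : IsProjectionValued P) (hs : 0 ≤ s) (hsτ : s ≤ τ)
    (hτt : τ ≤ t) (x : X) :
    V τ t ((1 - P t) (U t s x)) = U τ s ((1 - P s) x) := by
  refine hC.inv_apply_eq (hs.trans hsτ) hτt ?_ ?_
  · rw [hC.compl_apply_evolution hs hsτ, ((hP.isIdempotentElem hs).one_sub).apply_apply]
  · rw [hU.apply_apply hs hsτ hτt, hC.compl_apply_evolution hs (hsτ.trans hτt)]

theorem evolution_inv_apply (hC : CompatibleProjection U V P) (hU : IsEvolutionOperator U)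
    (hr : 0 ≤ r) (hrτ : r ≤ τ) (hτt : τ ≤ t) (x : X) :
    U τ r (V r t ((1 - P t) x)) = V τ t ((1 - P t) x) := by
  refine (hC.inv_apply_eq (hr.trans hrτ) hτt ?_ ?_).symm
  · rw [hC.compl_apply_evolution hr hrτ, hC.2.1 r t hr (hrτ.trans hτt)]
  · rw [hU.apply_apply hr hrτ hτt, hC.2.2.1 r t hr (hrτ.trans hτt)]

theorem continuousOn_inv_apply (hC : CompatibleProjection U V P) (hU : IsEvolutionOperator U)
    (x : X) : ContinuousOn (fun τ => V τ t ((1 - P t) x)) (Icc 0 t) :=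
  ((hU.continuousOn_apply le_rfl _).mono Icc_subset_Ici_self).congr fun _ hτ =>
    (hC.evolution_inv_apply hU le_rfl hτ.1 hτ.2 x).symm

end CompatibleProjection

def StableDichotomyBound (μ : ℝ → ℝ) (U : ℝ → ℝ → X →L[ℝ] X) (P : ℝ → X →L[ℝ] X)
    (N a ε : ℝ) : Prop :=
  ∀ s t, 0 ≤ s → s ≤ t → ‖(U t s).comp (P s)‖ ≤ N * (μ t / μ s) ^ (-a) * μ s ^ ε

def UnstableDichotomyBound (μ : ℝ → ℝ) (V : ℝ → ℝ → X →L[ℝ] X) (P : ℝ → X →L[ℝ] X)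
    (N b ε : ℝ) : Prop :=
  ∀ s t, 0 ≤ s → s ≤ t → ‖(V s t).comp (1 - P t)‖ ≤ N * (μ t / μ s) ^ (-b) * μ t ^ ε

def stableLyapunovIntegral (μ : ℝ → ℝ) (U : ℝ → ℝ → X →L[ℝ] X) (P : ℝ → X →L[ℝ] X)
    (p γ t : ℝ) (x : X) : ℝ :=
  ∫ τ in Ioi t, logDeriv μ τ * μ τ ^ (p * γ) * ‖U τ t (P t x)‖ ^ p

def unstableLyapunovIntegral (μ : ℝ → ℝ) (V : ℝ → ℝ → X →L[ℝ] X) (P : ℝ → X →L[ℝ] X)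
    (p γ t : ℝ) (x : X) : ℝ :=
  ∫ τ in 0..t, logDeriv μ τ * μ τ ^ (-(p * γ)) * ‖V τ t ((1 - P t) x)‖ ^ p

def lyapunovFunction (μ : ℝ → ℝ) (U V : ℝ → ℝ → X →L[ℝ] X) (P : ℝ → X →L[ℝ] X)
    (p γ t : ℝ) (x : X) : ℝ :=
  2 ^ (p - 1) * (stableLyapunovIntegral μ U P p γ t x - unstableLyapunovIntegral μ V P p γ t x)

variable {μ : ℝ → ℝ} {p γ a b ε N₁ N₂ : ℝ}

section Stable

theorem stableLyapunovIntegral_nonneg (hμ : IsGrowthRate μ)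
    (hdiff : ∀ t, 0 ≤ t → DifferentiableAt ℝ μ t) (ht : 0 ≤ t) (x : X) :
    0 ≤ stableLyapunovIntegral μ U P p γ t x :=
  setIntegral_nonneg measurableSet_Ioi fun τ hτ =>
    mul_nonneg (hμ.logDeriv_mul_rpow_nonneg hdiff (ht.trans hτ.le) _) (by positivity)

theorem stableLyapunovIntegral_apply_self (hP : IsProjectionValued P) (ht : 0 ≤ t) (x : X) :
    stableLyapunovIntegral μ U P p γ t (P t x) = stableLyapunovIntegral μ U P p γ t x := by
  simp only [stableLyapunovIntegral, (hP.isIdempotentElem ht).apply_apply]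

theorem stableLyapunovIntegral_compl (hP : IsProjectionValued P) (hp : p ≠ 0) (ht : 0 ≤ t)
    (x : X) : stableLyapunovIntegral μ U P p γ t ((1 - P t) x) = 0 := by
  simp only [stableLyapunovIntegral, (hP.isIdempotentElem ht).apply_one_sub_apply, map_zero,
    norm_zero, zero_rpow hp, mul_zero, integral_zero]

theorem stable_integrand_le (hμ : IsGrowthRate μ) (hdiff : ∀ t, 0 ≤ t → DifferentiableAt ℝ μ t)
    (hdich₁ : StableDichotomyBound μ U P N₁ a ε)
    (hp : 0 ≤ p) (ht : 0 ≤ t) (htτ : t ≤ τ) (x : X) :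
    logDeriv μ τ * μ τ ^ (p * γ) * ‖U τ t (P t x)‖ ^ p ≤
      (N₁ * μ t ^ ε * ‖x‖) ^ p * μ t ^ (p * a) * (logDeriv μ τ * μ τ ^ (p * (γ - a))) := by
  have hτ : 0 ≤ τ := ht.trans htτ
  have hnorm : ‖U τ t (P t x)‖ ≤ N₁ * μ t ^ ε * ‖x‖ * (μ τ / μ t) ^ (-a) :=
    calc ‖U τ t (P t x)‖ ≤ ‖(U τ t).comp (P t)‖ * ‖x‖ := ((U τ t).comp (P t)).le_opNorm x
      _ ≤ N₁ * (μ τ / μ t) ^ (-a) * μ t ^ ε * ‖x‖ := by gcongr; exact hdich₁ t τ ht htτ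
      _ = N₁ * μ t ^ ε * ‖x‖ * (μ τ / μ t) ^ (-a) := by ring
  have := mul_rpow_mul_rpow_le_of_le_mul_div_rpow (c := p * γ) (hμ.pos hτ) (hμ.pos ht)
    (hμ.logDeriv_nonneg hdiff hτ) (norm_nonneg _) hp hnorm
  rwa [show -(p * -a) = p * a by ring, show p * γ + p * -a = p * (γ - a) by ring] at this

theorem integrableOn_stable_integrand (hμ : IsGrowthRate μ)
    (hdiff : ∀ t, 0 ≤ t → DifferentiableAt ℝ μ t) (hU : IsEvolutionOperator U)
    (hdich₁ : StableDichotomyBound μ U P N₁ a ε)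
    (hp : 0 < p) (hγa : γ < a) (ht : 0 ≤ t) (x : X) :
    IntegrableOn (fun τ => logDeriv μ τ * μ τ ^ (p * γ) * ‖U τ t (P t x)‖ ^ p) (Ioi t) := by
  have hIoi : Ioi t ⊆ Ici 0 := fun τ hτ => ht.trans hτ.le
  refine .of_nonneg_of_le measurableSet_Ioi
    ((hμ.integrableOn_Ioi_logDeriv_mul_rpow hdiff (by nlinarith) ht).const_mul
      ((N₁ * μ t ^ ε * ‖x‖) ^ p * μ t ^ (p * a)))
    (aestronglyMeasurable_logDeriv_mul_rpow_mul _ measurableSet_Ioi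
      (fun τ hτ => (hdiff τ (hIoi hτ)).continuousAt.continuousWithinAt)
      (fun τ hτ => (hμ.pos (hIoi hτ)).ne')
      (((hU.continuousOn_apply ht _).mono Ioi_subset_Ici_self).norm.rpow_const
        fun _ _ => Or.inr hp.le))
    (fun τ hτ => ?_) (fun τ hτ => stable_integrand_le hμ hdiff hdich₁ hp.le ht hτ.le x)
  exact mul_nonneg (hμ.logDeriv_mul_rpow_nonneg hdiff (hIoi hτ) _) (by positivity)

theorem rpow_neg_mul_stableLyapunovIntegral_le (hμ : IsGrowthRate μ)
    (hdiff : ∀ t, 0 ≤ t → DifferentiableAt ℝ μ t)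
    (hdich₁ : StableDichotomyBound μ U P N₁ a ε)
    (hN₁ : 0 ≤ N₁) (hp : 0 < p) (hγa : γ < a) (ht : 0 ≤ t) (x : X) :
    μ t ^ (-(p * γ)) * stableLyapunovIntegral μ U P p γ t x ≤
      N₁ ^ p / (p * (a - γ)) * μ t ^ (p * ε) * ‖x‖ ^ p := by
  have hμt := hμ.pos ht
  have hc : p * (γ - a) < 0 := by nlinarith
  calc μ t ^ (-(p * γ)) * stableLyapunovIntegral μ U P p γ t x
      ≤ μ t ^ (-(p * γ)) * ∫ τ in Ioi t, (N₁ * μ t ^ ε * ‖x‖) ^ p * μ t ^ (p * a) *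
          (logDeriv μ τ * μ τ ^ (p * (γ - a))) := by
        gcongr
        exact setIntegral_mono_of_nonneg
          (fun τ hτ => mul_nonneg (hμ.logDeriv_mul_rpow_nonneg hdiff (ht.trans hτ.le) _)
            (by positivity))
          (fun τ hτ => stable_integrand_le hμ hdiff hdich₁ hp.le ht hτ.le x)
          ((hμ.integrableOn_Ioi_logDeriv_mul_rpow hdiff hc ht).const_mul _)
    _ = (N₁ * μ t ^ ε * ‖x‖) ^ p * (μ t ^ (-(p * γ)) * μ t ^ (p * a) * μ t ^ (p * (γ - a))) /
          (p * (a - γ)) := by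
        rw [integral_const_mul, hμ.integral_Ioi_logDeriv_mul_rpow hdiff hc ht]
        ring
    _ = N₁ ^ p / (p * (a - γ)) * μ t ^ (p * ε) * ‖x‖ ^ p := by
        rw [← rpow_add hμt, ← rpow_add hμt, show -(p * γ) + p * a + p * (γ - a) = 0 by ring,
          rpow_zero, mul_rpow_mul_rpow_mul hN₁ hμt.le (norm_nonneg x)]
        ring

theorem stableLyapunovIntegral_eq_integral_add (hμ : IsGrowthRate μ)
    (hdiff : ∀ t, 0 ≤ t → DifferentiableAt ℝ μ t) (hU : IsEvolutionOperator U)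
    (hC : CompatibleProjection U V P)
    (hdich₁ : StableDichotomyBound μ U P N₁ a ε)
    (hp : 0 < p) (hγa : γ < a) (hs : 0 ≤ s) (hst : s ≤ t) (x : X) :
    stableLyapunovIntegral μ U P p γ s x =
      (∫ τ in s..t, logDeriv μ τ * μ τ ^ (p * γ) * ‖U τ s (P s x)‖ ^ p) +
        stableLyapunovIntegral μ U P p γ t (U t s x) := by
  have hint := integrableOn_stable_integrand hμ hdiff hU hdich₁ hp hγa hs x
  rw [stableLyapunovIntegral, ← intervalIntegral.integral_interval_add_Ioi hint
    (hint.mono_set (Ioi_subset_Ioi hst))]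
  congr 1
  refine setIntegral_congr_fun measurableSet_Ioi fun τ hτ => ?_
  rw [hC.apply_evolution hs hst, hU.apply_apply hs hst hτ.le]

end Stable

section Unstable

theorem unstableLyapunovIntegral_nonneg (hμ : IsGrowthRate μ)
    (hdiff : ∀ t, 0 ≤ t → DifferentiableAt ℝ μ t) (ht : 0 ≤ t) (x : X) :
    0 ≤ unstableLyapunovIntegral μ V P p γ t x :=
  intervalIntegral.integral_nonneg ht fun τ hτ =>
    mul_nonneg (hμ.logDeriv_mul_rpow_nonneg hdiff hτ.1 _) (by positivity)

theorem unstableLyapunovIntegral_compl (hP : IsProjectionValued P) (ht : 0 ≤ t) (x : X) :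
    unstableLyapunovIntegral μ V P p γ t ((1 - P t) x) =
      unstableLyapunovIntegral μ V P p γ t x := by
  simp only [unstableLyapunovIntegral, ((hP.isIdempotentElem ht).one_sub).apply_apply]

theorem unstableLyapunovIntegral_apply_self (hP : IsProjectionValued P) (hp : p ≠ 0)
    (ht : 0 ≤ t) (x : X) : unstableLyapunovIntegral μ V P p γ t (P t x) = 0 := by
  simp only [unstableLyapunovIntegral, (hP.isIdempotentElem ht).one_sub_apply_apply, map_zero,
    norm_zero, zero_rpow hp, mul_zero, intervalIntegral.integral_zero]

theorem unstable_integrand_le (hμ : IsGrowthRate μ)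
    (hdiff : ∀ t, 0 ≤ t → DifferentiableAt ℝ μ t)
    (hdich₂ : UnstableDichotomyBound μ V P N₂ b ε)
    (hp : 0 ≤ p) (hτ : 0 ≤ τ) (hτt : τ ≤ t) (x : X) :
    logDeriv μ τ * μ τ ^ (-(p * γ)) * ‖V τ t ((1 - P t) x)‖ ^ p ≤
      (N₂ * μ t ^ ε * ‖x‖) ^ p * μ t ^ (-(p * b)) * (logDeriv μ τ * μ τ ^ (p * (b - γ))) := by
  have ht : 0 ≤ t := hτ.trans hτt
  have hnorm : ‖V τ t ((1 - P t) x)‖ ≤ N₂ * μ t ^ ε * ‖x‖ * (μ τ / μ t) ^ b :=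
    calc ‖V τ t ((1 - P t) x)‖ ≤ ‖(V τ t).comp (1 - P t)‖ * ‖x‖ :=
          ((V τ t).comp (1 - P t)).le_opNorm x
      _ ≤ N₂ * (μ t / μ τ) ^ (-b) * μ t ^ ε * ‖x‖ := by gcongr; exact hdich₂ τ t hτ hτt
      _ = N₂ * μ t ^ ε * ‖x‖ * (μ τ / μ t) ^ b := by
        rw [rpow_neg (div_nonneg (hμ.pos ht).le (hμ.pos hτ).le),
          ← inv_rpow (div_nonneg (hμ.pos ht).le (hμ.pos hτ).le), inv_div]
        ring
  have := mul_rpow_mul_rpow_le_of_le_mul_div_rpow (c := -(p * γ)) (hμ.pos hτ) (hμ.pos ht)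
    (hμ.logDeriv_nonneg hdiff hτ) (norm_nonneg _) hp hnorm
  rwa [show -(p * γ) + p * b = p * (b - γ) by ring] at this

theorem intervalIntegrable_unstable_integrand (hμ : IsGrowthRate μ)
    (hdiff : ∀ t, 0 ≤ t → DifferentiableAt ℝ μ t) (hU : IsEvolutionOperator U)
    (hC : CompatibleProjection U V P)
    (hdich₂ : UnstableDichotomyBound μ V P N₂ b ε)
    (hp : 0 < p) (hγb : γ < b) (ht : 0 ≤ t) (x : X) :
    IntervalIntegrable (fun τ => logDeriv μ τ * μ τ ^ (-(p * γ)) * ‖V τ t ((1 - P t) x)‖ ^ p)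
      volume 0 t := by
  have hIcc : Icc 0 t ⊆ Ici 0 := fun τ hτ => hτ.1
  rw [intervalIntegrable_iff_integrableOn_Icc_of_le ht] at *
  refine .of_nonneg_of_le measurableSet_Icc
    (((intervalIntegrable_iff_integrableOn_Icc_of_le ht).1
      (hμ.intervalIntegrable_logDeriv_mul_rpow hdiff (by nlinarith) le_rfl ht)).const_mul
      ((N₂ * μ t ^ ε * ‖x‖) ^ p * μ t ^ (-(p * b))))
    (aestronglyMeasurable_logDeriv_mul_rpow_mul _ measurableSet_Icc
      (fun τ hτ => (hdiff τ (hIcc hτ)).continuousAt.continuousWithinAt)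
      (fun τ hτ => (hμ.pos (hIcc hτ)).ne')
      ((hC.continuousOn_inv_apply hU x).norm.rpow_const fun _ _ => Or.inr hp.le))
    (fun τ hτ => ?_) (fun τ hτ => unstable_integrand_le hμ hdiff hdich₂ hp.le hτ.1 hτ.2 x)
  exact mul_nonneg (hμ.logDeriv_mul_rpow_nonneg hdiff hτ.1 _) (by positivity)

theorem rpow_mul_unstableLyapunovIntegral_le (hμ : IsGrowthRate μ)
    (hdiff : ∀ t, 0 ≤ t → DifferentiableAt ℝ μ t) (hU : IsEvolutionOperator U)
    (hC : CompatibleProjection U V P)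
    (hdich₂ : UnstableDichotomyBound μ V P N₂ b ε)
    (hN₂ : 0 ≤ N₂) (hp : 0 < p) (hγb : γ < b) (ht : 0 ≤ t) (x : X) :
    μ t ^ (p * γ) * unstableLyapunovIntegral μ V P p γ t x ≤
      N₂ ^ p / (p * (b - γ)) * μ t ^ (p * ε) * ‖x‖ ^ p := by
  have hμt := hμ.pos ht
  have hc : 0 < p * (b - γ) := by nlinarith
  calc μ t ^ (p * γ) * unstableLyapunovIntegral μ V P p γ t x
      ≤ μ t ^ (p * γ) * ∫ τ in 0..t, (N₂ * μ t ^ ε * ‖x‖) ^ p * μ t ^ (-(p * b)) *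
          (logDeriv μ τ * μ τ ^ (p * (b - γ))) := by
        gcongr
        exact intervalIntegral.integral_mono_on ht
          (intervalIntegrable_unstable_integrand hμ hdiff hU hC hdich₂ hp hγb ht x)
          ((hμ.intervalIntegrable_logDeriv_mul_rpow hdiff hc.ne' le_rfl ht).const_mul _)
          fun τ hτ => unstable_integrand_le hμ hdiff hdich₂ hp.le hτ.1 hτ.2 x
    _ ≤ μ t ^ (p * γ) * ((N₂ * μ t ^ ε * ‖x‖) ^ p * μ t ^ (-(p * b)) *
          (μ t ^ (p * (b - γ)) / (p * (b - γ)))) := by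
        rw [intervalIntegral.integral_const_mul,
          hμ.integral_logDeriv_mul_rpow hdiff hc.ne' le_rfl ht]
        gcongr
        exact sub_le_self _ (rpow_nonneg (hμ.pos le_rfl).le _)
    _ = (N₂ * μ t ^ ε * ‖x‖) ^ p * (μ t ^ (p * γ) * μ t ^ (-(p * b)) * μ t ^ (p * (b - γ))) /
          (p * (b - γ)) := by
        ring
    _ = N₂ ^ p / (p * (b - γ)) * μ t ^ (p * ε) * ‖x‖ ^ p := by
        rw [← rpow_add hμt, ← rpow_add hμt, show p * γ + -(p * b) + p * (b - γ) = 0 by ring,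
          rpow_zero, mul_rpow_mul_rpow_mul hN₂ hμt.le (norm_nonneg x)]
        ring

theorem unstable_integrand_evolution_eqOn (hU : IsEvolutionOperator U)
    (hP : IsProjectionValued P) (hC : CompatibleProjection U V P) (hs : 0 ≤ s) (x : X) :
    EqOn (fun τ => logDeriv μ τ * μ τ ^ (-(p * γ)) * ‖V τ t ((1 - P t) (U t s x))‖ ^ p)
      (fun τ => logDeriv μ τ * μ τ ^ (-(p * γ)) * ‖U τ s ((1 - P s) x)‖ ^ p) (Icc s t) :=
  fun τ hτ => by simp only [hC.inv_apply_compl_evolution_of_ge hU hP hs hτ.1 hτ.2]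

theorem intervalIntegrable_unstable_evolution_integrand (hμ : IsGrowthRate μ)
    (hdiff : ∀ t, 0 ≤ t → DifferentiableAt ℝ μ t) (hU : IsEvolutionOperator U)
    (hP : IsProjectionValued P) (hC : CompatibleProjection U V P)
    (hdich₂ : UnstableDichotomyBound μ V P N₂ b ε)
    (hp : 0 < p) (hγb : γ < b) (hs : 0 ≤ s) (hst : s ≤ t) (x : X) :
    IntervalIntegrable (fun τ => logDeriv μ τ * μ τ ^ (-(p * γ)) * ‖U τ s ((1 - P s) x)‖ ^ p)
      volume s t := by
  have hint := intervalIntegrable_unstable_integrand hμ hdiff hU hC hdich₂ hp hγb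
    (hs.trans hst) (U t s x)
  refine (hint.mono_set (uIcc_subset_uIcc (mem_uIcc_of_le hs hst) right_mem_uIcc)).congr
    ((unstable_integrand_evolution_eqOn hU hP hC hs x).mono ?_)
  rw [uIoc_of_le hst]
  exact Ioc_subset_Icc_self

theorem unstableLyapunovIntegral_evolution_eq_add (hμ : IsGrowthRate μ)
    (hdiff : ∀ t, 0 ≤ t → DifferentiableAt ℝ μ t) (hU : IsEvolutionOperator U)
    (hP : IsProjectionValued P) (hC : CompatibleProjection U V P)
    (hdich₂ : UnstableDichotomyBound μ V P N₂ b ε)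
    (hp : 0 < p) (hγb : γ < b) (hs : 0 ≤ s) (hst : s ≤ t) (x : X) :
    unstableLyapunovIntegral μ V P p γ t (U t s x) = unstableLyapunovIntegral μ V P p γ s x +
      ∫ τ in s..t, logDeriv μ τ * μ τ ^ (-(p * γ)) * ‖U τ s ((1 - P s) x)‖ ^ p := by
  have hint := intervalIntegrable_unstable_integrand hμ hdiff hU hC hdich₂ hp hγb
    (hs.trans hst) (U t s x)
  have hsmem : s ∈ uIcc 0 t := mem_uIcc_of_le hs hst
  rw [unstableLyapunovIntegral, ← intervalIntegral.integral_add_adjacent_intervals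
    (hint.mono_set (uIcc_subset_uIcc left_mem_uIcc hsmem))
    (hint.mono_set (uIcc_subset_uIcc hsmem right_mem_uIcc))]
  congr 1
  · refine intervalIntegral.integral_congr fun τ hτ => ?_
    rw [uIcc_of_le hs] at hτ
    simp only [hC.inv_apply_compl_evolution_of_le hU hτ.1 hτ.2 hst]
  · exact intervalIntegral.integral_congr
      (uIcc_of_le hst ▸ unstable_integrand_evolution_eqOn hU hP hC hs x)

end Unstable

theorem MemHClass.norm_rpow_le {H : ℝ → X →L[ℝ] X} (hH : MemHClass μ P γ p H)
    (hμ : IsGrowthRate μ) (hdiff : ∀ t, 0 ≤ t → DifferentiableAt ℝ μ t) (hp : 1 ≤ p)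
    (hτ : 0 ≤ τ) (y : X) :
    ‖H τ y‖ ^ p ≤ 2 ^ (p - 1) * (logDeriv μ τ * μ τ ^ (p * γ) * ‖P τ y‖ ^ p +
      logDeriv μ τ * μ τ ^ (-(p * γ)) * ‖(1 - P τ) y‖ ^ p) := by
  have hμτ := hμ.pos hτ
  have hw := hμ.logDeriv_nonneg hdiff hτ
  have hα : 0 ≤ μ τ ^ γ * ‖P τ y‖ := by positivity
  have hβ : 0 ≤ μ τ ^ (-γ) * ‖(1 - P τ) y‖ := by positivity
  have hHy : ‖H τ y‖ ≤ logDeriv μ τ ^ (1 / p) *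
      (μ τ ^ γ * ‖P τ y‖ + μ τ ^ (-γ) * ‖(1 - P τ) y‖) := by
    rw [logDeriv_apply]
    linarith [hH.2 τ hτ y]
  have hpow : ∀ c : ℝ, (μ τ ^ c) ^ p = μ τ ^ (p * c) := fun c => by
    rw [← rpow_mul hμτ.le, mul_comm]
  calc ‖H τ y‖ ^ p
      ≤ (logDeriv μ τ ^ (1 / p) * (μ τ ^ γ * ‖P τ y‖ + μ τ ^ (-γ) * ‖(1 - P τ) y‖)) ^ p := by
        gcongr
    _ = logDeriv μ τ * (μ τ ^ γ * ‖P τ y‖ + μ τ ^ (-γ) * ‖(1 - P τ) y‖) ^ p := by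
        rw [mul_rpow (by positivity) (by positivity), ← rpow_mul hw,
          one_div_mul_cancel (by linarith), rpow_one]
    _ ≤ logDeriv μ τ * (2 ^ (p - 1) *
          ((μ τ ^ γ * ‖P τ y‖) ^ p + (μ τ ^ (-γ) * ‖(1 - P τ) y‖) ^ p)) := by
        gcongr
        exact rpow_add_le_mul_rpow_add_rpow hα hβ hp
    _ = 2 ^ (p - 1) * (logDeriv μ τ * μ τ ^ (p * γ) * ‖P τ y‖ ^ p +
          logDeriv μ τ * μ τ ^ (-(p * γ)) * ‖(1 - P τ) y‖ ^ p) := by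
        rw [mul_rpow (by positivity) (norm_nonneg _), mul_rpow (by positivity) (norm_nonneg _),
          hpow, hpow, mul_neg]
        ring

section LyapunovFunction

theorem lyapunovFunction_evolution_add_integral_le {H : ℝ → X →L[ℝ] X} (hμ : IsGrowthRate μ)
    (hdiff : ∀ t, 0 ≤ t → DifferentiableAt ℝ μ t) (hU : IsEvolutionOperator U)
    (hP : IsProjectionValued P) (hC : CompatibleProjection U V P)
    (hdich₁ : StableDichotomyBound μ U P N₁ a ε)
    (hdich₂ : UnstableDichotomyBound μ V P N₂ b ε)
    (hH : MemHClass μ P γ p H) (hp : 1 ≤ p) (hγa : γ < a) (hγb : γ < b) (hs : 0 ≤ s)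
    (hst : s ≤ t) (x : X) :
    lyapunovFunction μ U V P p γ t (U t s x) + ∫ τ in s..t, ‖H τ (U τ s x)‖ ^ p ≤
      lyapunovFunction μ U V P p γ s x := by
  have hp0 : 0 < p := by linarith
  have hstable : IntervalIntegrable
      (fun τ => logDeriv μ τ * μ τ ^ (p * γ) * ‖U τ s (P s x)‖ ^ p) volume s t :=
    (intervalIntegrable_iff_integrableOn_Ioc_of_le hst).2
      ((integrableOn_stable_integrand hμ hdiff hU hdich₁ hp0 hγa hs x).mono_set
        Ioc_subset_Ioi_self)
  have hunstable := intervalIntegrable_unstable_evolution_integrand hμ hdiff hU hP hC hdich₂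
    hp0 hγb hs hst x
  have hHint : ∫ τ in s..t, ‖H τ (U τ s x)‖ ^ p ≤ 2 ^ (p - 1) *
      ((∫ τ in s..t, logDeriv μ τ * μ τ ^ (p * γ) * ‖U τ s (P s x)‖ ^ p) +
        ∫ τ in s..t, logDeriv μ τ * μ τ ^ (-(p * γ)) * ‖U τ s ((1 - P s) x)‖ ^ p) := by
    rw [← intervalIntegral.integral_add hstable hunstable,
      ← intervalIntegral.integral_const_mul, intervalIntegral.integral_of_le hst,
      intervalIntegral.integral_of_le hst]
    refine setIntegral_mono_of_nonneg (fun τ _ => rpow_nonneg (norm_nonneg _) p)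
      (fun τ hτ => ?_) ((hstable.add hunstable).const_mul _).1
    have := hH.norm_rpow_le hμ hdiff hp (hs.trans hτ.1.le) (U τ s x)
    rwa [hC.apply_evolution hs hτ.1.le, hC.compl_apply_evolution hs hτ.1.le] at this
  rw [lyapunovFunction, lyapunovFunction,
    stableLyapunovIntegral_eq_integral_add hμ hdiff hU hC hdich₁ hp0 hγa hs hst x,
    unstableLyapunovIntegral_evolution_eq_add hμ hdiff hU hP hC hdich₂ hp0 hγb hs hst x]
  linarith

theorem lyapunovFunction_apply_self_nonneg (hμ : IsGrowthRate μ)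
    (hdiff : ∀ t, 0 ≤ t → DifferentiableAt ℝ μ t) (hP : IsProjectionValued P) (hp : p ≠ 0)
    (ht : 0 ≤ t) (x : X) : 0 ≤ lyapunovFunction μ U V P p γ t (P t x) := by
  rw [lyapunovFunction, unstableLyapunovIntegral_apply_self hP hp ht, sub_zero]
  exact mul_nonneg (rpow_nonneg zero_le_two _) (stableLyapunovIntegral_nonneg hμ hdiff ht _)

theorem lyapunovFunction_compl_nonpos (hμ : IsGrowthRate μ)
    (hdiff : ∀ t, 0 ≤ t → DifferentiableAt ℝ μ t) (hP : IsProjectionValued P) (hp : p ≠ 0)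
    (ht : 0 ≤ t) (x : X) : lyapunovFunction μ U V P p γ t ((1 - P t) x) ≤ 0 := by
  rw [lyapunovFunction, stableLyapunovIntegral_compl hP hp ht, zero_sub, mul_neg, neg_nonpos]
  exact mul_nonneg (rpow_nonneg zero_le_two _) (unstableLyapunovIntegral_nonneg hμ hdiff ht _)

theorem rpow_mul_lyapunovFunction_sub_le (hμ : IsGrowthRate μ)
    (hdiff : ∀ t, 0 ≤ t → DifferentiableAt ℝ μ t) (hU : IsEvolutionOperator U)
    (hP : IsProjectionValued P) (hC : CompatibleProjection U V P)
    (hdich₁ : StableDichotomyBound μ U P N₁ a ε)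
    (hdich₂ : UnstableDichotomyBound μ V P N₂ b ε)
    (hN₁ : 0 ≤ N₁) (hN₂ : 0 ≤ N₂) (hp : 0 < p) (hγa : γ < a) (hγb : γ < b) (ht : 0 ≤ t)
    (x : X) :
    μ t ^ (-(p * γ)) * lyapunovFunction μ U V P p γ t (P t x) -
        μ t ^ (p * γ) * lyapunovFunction μ U V P p γ t ((1 - P t) x) ≤
      2 ^ (p - 1) * (N₁ ^ p / (p * (a - γ)) + N₂ ^ p / (p * (b - γ))) *
        μ t ^ (p * ε) * ‖x‖ ^ p := by
  have hstable := rpow_neg_mul_stableLyapunovIntegral_le hμ hdiff hdich₁ hN₁ hp hγa ht x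
  have hunstable := rpow_mul_unstableLyapunovIntegral_le hμ hdiff hU hC hdich₂ hN₂ hp hγb ht x
  rw [lyapunovFunction, lyapunovFunction, stableLyapunovIntegral_apply_self hP ht,
    unstableLyapunovIntegral_apply_self hP hp.ne' ht, stableLyapunovIntegral_compl hP hp.ne' ht,
    unstableLyapunovIntegral_compl hP ht]
  have h2 : (0 : ℝ) ≤ 2 ^ (p - 1) := rpow_nonneg zero_le_two _
  nlinarith

end LyapunovFunction

theorem dichotomy_implies_lyapunov_function_general
    {X : Type*} [NormedAddCommGroup X] [NormedSpace ℝ X]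
    (μ : ℝ → ℝ) (hgr : IsGrowthRate μ)
    (hdiff : ∀ t, 0 ≤ t → DifferentiableAt ℝ μ t)
    (p : ℝ) (hp : 1 ≤ p)
    (U V : ℝ → ℝ → X →L[ℝ] X) (P : ℝ → X →L[ℝ] X)
    (hU : IsEvolutionOperator U) (hP : IsProjectionValued P)
    (hC : CompatibleProjection U V P)
    (a b ε N₁ N₂ : ℝ)
    (hN₁ : 1 ≤ N₁) (hN₂ : 1 ≤ N₂)
    (hdich₁ : ∀ s t, 0 ≤ s → s ≤ t →
      ‖(U t s).comp (P s)‖ ≤ N₁ * (μ t / μ s) ^ (-a) * μ s ^ ε)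
    (hdich₂ : ∀ s t, 0 ≤ s → s ≤ t →
      ‖(V s t).comp (1 - P t)‖ ≤ N₂ * (μ t / μ s) ^ (-b) * μ t ^ ε)
    (γ : ℝ) (hγ : γ < min a b)
    (H : ℝ → X →L[ℝ] X) (hH : MemHClass μ P γ p H) :
    ∃ L : ℝ → X → ℝ,
      (∀ s t, 0 ≤ s → s ≤ t → ∀ x : X,
        L t (U t s x) + ∫ τ in s..t, ‖H τ (U τ s x)‖ ^ p ≤ L s x) ∧
      (∀ t, 0 ≤ t → ∀ x : X, 0 ≤ L t (P t x) ∧ L t ((1 - P t) x) ≤ 0) ∧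
      (∀ t, 0 ≤ t → ∀ x : X,
        μ t ^ (-(p * γ)) * L t (P t x) - μ t ^ (p * γ) * L t ((1 - P t) x) ≤
          (2 : ℝ) ^ (p - 1) * (N₁ ^ p / (p * (a - γ)) + N₂ ^ p / (p * (b - γ))) *
            μ t ^ (p * ε) * ‖x‖ ^ p) := by
  have hp0 : 0 < p := by linarith
  have hγa : γ < a := hγ.trans_le (min_le_left a b)
  have hγb : γ < b := hγ.trans_le (min_le_right a b)
  refine ⟨lyapunovFunction μ U V P p γ, fun s t hs hst x => ?_, fun t ht x => ⟨?_, ?_⟩,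
    fun t ht x => ?_⟩
  · exact lyapunovFunction_evolution_add_integral_le hgr hdiff hU hP hC hdich₁ hdich₂ hH hp hγa
      hγb hs hst x
  · exact lyapunovFunction_apply_self_nonneg hgr hdiff hP hp0.ne' ht x
  · exact lyapunovFunction_compl_nonpos hgr hdiff hP hp0.ne' ht x
  · exact rpow_mul_lyapunovFunction_sub_le hgr hdiff hU hP hC hdich₁ hdich₂ (by linarith)
      (by linarith) hp0 hγa hγb ht x

/-- Theorem 3.6: if `U` has a nonuniform μ-dichotomy with projection valued function `P`
(with constants `a, b, ε, N₁, N₂`), then for every `0 < γ < min{a,b}` and every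
`H ∈ H^μ_{γ,p}(P)` there is a Lyapunov-type function `L : [0,∞) × X → ℝ` satisfying
(i) `L(t, U(t,s)x) + ∫_s^t ‖H(τ)U(τ,s)x‖^p dτ ≤ L(s,x)`,
(ii) `L(t, P(t)x) ≥ 0` and `L(t, Q(t)x) ≤ 0`,
(iii) `μ(t)^{-pγ} L(t,P(t)x) - μ(t)^{pγ} L(t,Q(t)x) ≤ 2^{p-1} D μ(t)^{pε} ‖x‖^p`,
where `D = N₁^p/(p(a-γ)) + N₂^p/(p(b-γ))`. -/
theorem dichotomy_implies_lyapunov_function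
    {X : Type*} [NormedAddCommGroup X] [NormedSpace ℝ X] [CompleteSpace X]
    (μ : ℝ → ℝ) (hgr : IsGrowthRate μ)
    (hdiff : ∀ t, 0 ≤ t → DifferentiableAt ℝ μ t)
    (p : ℝ) (hp : 1 ≤ p)
    (U V : ℝ → ℝ → X →L[ℝ] X) (P : ℝ → X →L[ℝ] X)
    (hU : IsEvolutionOperator U) (hP : IsProjectionValued P)
    (hC : CompatibleProjection U V P)
    (a b ε N₁ N₂ : ℝ) (ha : 0 < a) (hb : 0 < b) (hε : 0 ≤ ε)
    (hN₁ : 1 ≤ N₁) (hN₂ : 1 ≤ N₂)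
    (hdich₁ : ∀ s t, 0 ≤ s → s ≤ t →
      ‖(U t s).comp (P s)‖ ≤ N₁ * (μ t / μ s) ^ (-a) * μ s ^ ε)
    (hdich₂ : ∀ s t, 0 ≤ s → s ≤ t →
      ‖(V s t).comp (1 - P t)‖ ≤ N₂ * (μ t / μ s) ^ (-b) * μ t ^ ε)
    (γ : ℝ) (hγ0 : 0 < γ) (hγ : γ < min a b)
    (H : ℝ → X →L[ℝ] X) (hH : MemHClass μ P γ p H) :
    ∃ L : ℝ → X → ℝ,
      (∀ s t, 0 ≤ s → s ≤ t → ∀ x : X,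
        L t (U t s x) + ∫ τ in s..t, ‖H τ (U τ s x)‖ ^ p ≤ L s x) ∧
      (∀ t, 0 ≤ t → ∀ x : X, 0 ≤ L t (P t x) ∧ L t ((1 - P t) x) ≤ 0) ∧
      (∀ t, 0 ≤ t → ∀ x : X,
        μ t ^ (-(p * γ)) * L t (P t x) - μ t ^ (p * γ) * L t ((1 - P t) x) ≤
          (2 : ℝ) ^ (p - 1) * (N₁ ^ p / (p * (a - γ)) + N₂ ^ p / (p * (b - γ))) *
            μ t ^ (p * ε) * ‖x‖ ^ p) :=
  dichotomy_implies_lyapunov_function_general μ hgr hdiff p hp U V P hU hP hC a b ε N₁ N₂ hN₁ hN₂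
    hdich₁ hdich₂ γ hγ H hH
end
end
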